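/- arXiv:2004.03900 — 14 statements merged into one kernel-verified Lean document; each statement's English description precedes it below -/
import Mathlib

section
/- Let M be a simple-direct-projective right R-module and L a coclosed submodule of M containing Soc(M). Then L is simple-direct-projective. -/
section Defs

variable (R : Type*) [Ring R] (M : Type*) [AddCommGroup M] [Module R M]

/-- `K` is a small (superfluous) submodule of `M`. -/
def SmallSubmodule (K : Submodule R M) : Prop :=
  ∀ N : Submodule R M, K ⊔ N = ⊤ → N = ⊤

/-- `A` is a direct summand of `M`. -/
def IsDirectSummand (A : Submodule R M) : Prop :=
  ∃ B : Submodule R M, IsCompl A B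

/-- The socle of `M`: the sum of all simple submodules. -/
def moduleSocle : Submodule R M :=
  sSup {S : Submodule R M | IsSimpleModule R S}

/-- The (Jacobson) radical of `M`: the intersection of all maximal submodules. -/
def moduleRad : Submodule R M :=
  sInf {S : Submodule R M | IsCoatom S}

/-- `M` is simple-direct-projective. -/
def SimpleDirectProjective : Prop :=
  ∀ A B : Submodule R M, IsSimpleModule R B → Nonempty ((M ⧸ A) ≃ₗ[R] B) →
    IsDirectSummand R M B → IsDirectSummand R M A

/-- `M` is simple-direct-injective. -/
def SimpleDirectInjective : Prop :=
  ∀ A B : Submodule R M, IsSimpleModule R A → IsSimpleModule R B →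
    Nonempty (A ≃ₗ[R] B) → IsDirectSummand R M B → IsDirectSummand R M A

/-- `L` is a coclosed submodule of `M`. -/
def CoclosedSubmodule (L : Submodule R M) : Prop :=
  ∀ K : Submodule R M, K ≤ L →
    SmallSubmodule R (M ⧸ K) (L.map K.mkQ) → K = L

end Defs

/-- The `p`-primary component of an abelian group `M`. -/
def primaryComponent (M : Type*) [AddCommGroup M] (p : ℕ) : Submodule ℤ M :=
  Submodule.torsion' ℤ M (Submonoid.powers (p : ℤ))

/-- An atom (simple submodule) which is not small is a direct summand. -/
lemma aux_atom_summand {R : Type*} [Ring R] {M : Type*} [AddCommGroup M] [Module R M]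
    {P : Submodule R M} (hP : IsAtom P) (h : ¬ SmallSubmodule R M P) :
    IsDirectSummand R M P := by
  unfold SmallSubmodule at h
  push_neg at h
  obtain ⟨N, hN, hN'⟩ := h
  refine ⟨N, ?_, codisjoint_iff.mpr hN⟩
  rw [disjoint_iff]
  rcases (lt_or_eq_of_le (inf_le_left : P ⊓ N ≤ P)) with hlt | heq
  · exact hP.2 _ hlt
  · exfalso
    have hPN : P ≤ N := heq ▸ inf_le_right
    rw [sup_eq_right.mpr hPN] at hN
    exact hN' hN

/-- The image of a small submodule under a surjective linear map is small. -/
lemma aux_small_map {R : Type*} [Ring R] {M M' : Type*} [AddCommGroup M] [Module R M]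
    [AddCommGroup M'] [Module R M'] {f : M →ₗ[R] M'} (hf : Function.Surjective f)
    {K : Submodule R M} (hK : SmallSubmodule R M K) :
    SmallSubmodule R M' (K.map f) := by
  intro N hN
  have hsup : K ⊔ N.comap f = ⊤ := by
    rw [eq_top_iff]
    intro x _
    have hx : f x ∈ K.map f ⊔ N := by rw [hN]; trivial
    obtain ⟨y, hy, n, hn, hyn⟩ := Submodule.mem_sup.mp hx
    obtain ⟨k, hk, rfl⟩ := hy
    have : x - k ∈ N.comap f := by
      simp only [Submodule.mem_comap, map_sub]
      rw [show f x = f k + n from hyn.symm]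
      simpa using hn
    have : k + (x - k) ∈ K ⊔ N.comap f :=
      Submodule.add_mem_sup hk this
    simpa using this
  have hc : N.comap f = ⊤ := hK _ hsup
  have := Submodule.map_comap_eq f N
  rw [hc, Submodule.map_top, LinearMap.range_eq_top.mpr hf] at this
  rw [this, top_inf_eq]

/-- A coclosed submodule containing the socle of a simple-direct-projective module
is simple-direct-projective. -/
theorem stmt_1 {R : Type*} [Ring R] {M : Type*} [AddCommGroup M] [Module R M]
    (hM : SimpleDirectProjective R M) (L : Submodule R M)
    (hL : CoclosedSubmodule R M L) (hsoc : moduleSocle R M ≤ L) :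
    SimpleDirectProjective R L := by
  intro A B hB hE hBsum
  obtain ⟨e⟩ := hE
  obtain ⟨C, hC⟩ := hBsum
  set A' : Submodule R M := A.map L.subtype with hA'def
  set B' : Submodule R M := B.map L.subtype with hB'def
  set C' : Submodule R M := C.map L.subtype with hC'def
  have hA'L : A' ≤ L := Submodule.map_subtype_le L A
  have hC'L : C' ≤ L := Submodule.map_subtype_le L C
  -- B' is simple
  have hB' : IsSimpleModule R B' := by
    haveI := hB
    exact IsSimpleModule.congr (L.equivSubtypeMap B).symm
  -- B is not ⊥
  have hBatom : IsAtom B := isSimpleModule_iff_isAtom.mp hB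
  -- B' is not small in M
  have hB'notsmall : ¬ SmallSubmodule R M B' := by
    intro hsm
    have hLeq : L = B' ⊔ C' := by
      have htop : B ⊔ C = ⊤ := hC.codisjoint.eq_top
      rw [hB'def, hC'def, ← Submodule.map_sup, htop, Submodule.map_subtype_top]
    have key : L.map C'.mkQ = B'.map C'.mkQ := by
      rw [hLeq, Submodule.map_sup, Submodule.mkQ_map_self, sup_bot_eq]
    have hCeq : C' = L := hL C' hC'L (by
      rw [key]; exact aux_small_map (Submodule.mkQ_surjective C') hsm)
    have hBleC : B ≤ C := by
      have : B' ≤ C' := by rw [hCeq]; exact hB'def ▸ Submodule.map_subtype_le L B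
      intro x hx
      have : L.subtype x ∈ C' := this ⟨x, hx, rfl⟩
      obtain ⟨y, hy, hxy⟩ := this
      have : y = x := Subtype.ext hxy
      rwa [← this]
    have : B = ⊥ := by
      have := hC.disjoint.eq_bot
      rw [← this, inf_eq_left.mpr hBleC]
    exact hBatom.1 this
  have hB'sum : IsDirectSummand R M B' :=
    aux_atom_summand (isSimpleModule_iff_isAtom.mp hB') hB'notsmall
  -- P := image of L in M/A' is isomorphic to L/A, hence simple
  set f : ↥L →ₗ[R] (M ⧸ A') := A'.mkQ ∘ₗ L.subtype with hfdef
  have hker : LinearMap.ker f = A := by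
    rw [hfdef, LinearMap.ker_comp, Submodule.ker_mkQ]
    exact Submodule.comap_map_eq_of_injective L.injective_subtype A
  have hrange : LinearMap.range f = L.map A'.mkQ := by
    rw [hfdef, LinearMap.range_comp, Submodule.range_subtype]
  have eP : (↥L ⧸ A) ≃ₗ[R] ↥(L.map A'.mkQ) :=
    ((Submodule.quotEquivOfEq A (LinearMap.ker f) hker.symm).trans
      f.quotKerEquivRange).trans (LinearEquiv.ofEq _ _ hrange)
  have hP : IsSimpleModule R ↥(L.map A'.mkQ) := by
    haveI := hB
    exact IsSimpleModule.congr ((eP.symm.trans e).trans (L.equivSubtypeMap B)).symm.symm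
  have hPatom : IsAtom (L.map A'.mkQ) := isSimpleModule_iff_isAtom.mp hP
  -- P is not small in M/A'
  have hPnotsmall : ¬ SmallSubmodule R (M ⧸ A') (L.map A'.mkQ) := by
    intro hsm
    have hAeq : A' = L := hL A' hA'L hsm
    apply hPatom.1
    rw [← hAeq, Submodule.mkQ_map_self]
  obtain ⟨N, hN⟩ := aux_atom_summand hPatom hPnotsmall
  set T : Submodule R M := N.comap A'.mkQ with hTdef
  have hA'T : A' ≤ T := by
    calc A' = LinearMap.ker A'.mkQ := (Submodule.ker_mkQ A').symm
    _ = Submodule.comap A'.mkQ ⊥ := (Submodule.comap_bot _).symm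
    _ ≤ T := Submodule.comap_mono bot_le
  have hmapT : T.map A'.mkQ = N := by
    rw [hTdef, Submodule.map_comap_eq, Submodule.range_mkQ, top_inf_eq]
  -- M/T ≅ B'
  have eq1 : (M ⧸ T) ≃ₗ[R] B' :=
    ((((Submodule.quotientQuotientEquivQuotient A' T hA'T).symm.trans
      (Submodule.quotEquivOfEq _ _ hmapT)).trans
      (Submodule.quotientEquivOfIsCompl N (L.map A'.mkQ) hN.symm)).trans
      (eP.symm.trans e)).trans (L.equivSubtypeMap B)
  obtain ⟨X, hX⟩ := hM T B' hB' ⟨eq1⟩ hB'sum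
  -- X is simple, hence inside the socle, hence inside L
  have eX : (M ⧸ T) ≃ₗ[R] X := Submodule.quotientEquivOfIsCompl T X hX
  have hXsimple : IsSimpleModule R X := by
    haveI := hB'
    exact IsSimpleModule.congr (eX.symm.trans eq1)
  have hXL : X ≤ L := le_trans (le_sSup hXsimple) hsoc
  -- L ⊓ T = A'
  have hLT : L ⊓ T = A' := by
    have h1 : (L.map A'.mkQ) ⊓ N = ⊥ := hN.disjoint.eq_bot
    have h2 : Submodule.comap A'.mkQ (L.map A'.mkQ ⊓ N) = A' := by
      rw [h1, Submodule.comap_bot, Submodule.ker_mkQ]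
    rw [Submodule.comap_inf] at h2
    have h3 : Submodule.comap A'.mkQ (L.map A'.mkQ) = L := by
      rw [Submodule.comap_map_eq, Submodule.ker_mkQ, sup_eq_left.mpr hA'L]
    rwa [h3] at h2
  have hLsup : A' ⊔ X = L := by
    have htop : T ⊔ X = ⊤ := hX.codisjoint.eq_top
    calc A' ⊔ X = (L ⊓ T) ⊔ X := by rw [hLT]
    _ = L ⊓ (T ⊔ X) := inf_sup_assoc_of_le T hXL
    _ = L := by rw [htop, inf_top_eq]
  have hdisj : A' ⊓ X = ⊥ := by
    rw [← le_bot_iff]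
    calc A' ⊓ X ≤ T ⊓ X := inf_le_inf_right X hA'T
    _ = ⊥ := hX.disjoint.eq_bot
  -- pull back to L
  refine ⟨X.comap L.subtype, ?_, ?_⟩
  · rw [disjoint_iff]
    have hA : A = A'.comap L.subtype :=
      (Submodule.comap_map_eq_of_injective L.injective_subtype A).symm
    rw [hA, ← Submodule.comap_inf, hdisj, Submodule.comap_bot, Submodule.ker_subtype]
  · rw [codisjoint_iff]
    apply Submodule.map_injective_of_injective L.injective_subtype
    rw [Submodule.map_sup, Submodule.map_comap_eq, Submodule.range_subtype,
      inf_eq_right.mpr hXL, Submodule.map_subtype_top, ← hA'def, hLsup]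
end

section
/- For any abelian group G, the torsion subgroup T(G) is a coclosed submodule of G. -/
section Aux

variable {H : Type*} [AddCommGroup H]

/-- If the torsion submodule is small, every torsion element is divisible by every prime. -/
lemma torsion_prime_div (hs : ∀ N : Submodule ℤ H, Submodule.torsion ℤ H ⊔ N = ⊤ → N = ⊤)
    {p : ℕ} (hp : p.Prime) {y : H} (hy : y ∈ Submodule.torsion ℤ H) :
    ∃ h : H, (p : ℤ) • h = y := by
  by_contra hndvd
  push_neg at hndvd
  set pH : Submodule ℤ H := LinearMap.range ((p : ℤ) • (LinearMap.id : H →ₗ[ℤ] H)) with hpH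
  have hmem : ∀ x : H, x ∈ pH ↔ ∃ h : H, (p : ℤ) • h = x := by
    intro x
    simp [hpH, LinearMap.mem_range]
  have hypH : y ∉ pH := by
    rw [hmem]; push_neg; exact hndvd
  -- Zorn: maximal N ⊇ pH with y ∉ N
  obtain ⟨N, hNge, hNmax⟩ := zorn_le_nonempty₀ {N : Submodule ℤ H | pH ≤ N ∧ y ∉ N}
    (fun c hc hchain Nc hNc => by
      refine ⟨sSup c, ⟨?_, ?_⟩, fun z hz => le_sSup hz⟩
      · exact le_trans (hc hNc).1 (le_sSup hNc)
      · intro hy'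
        obtain ⟨N', hN'c, hyN'⟩ := (Submodule.mem_sSup_of_directed ⟨Nc, hNc⟩
          (hchain.directedOn)).mp hy'
        exact (hc hN'c).2 hyN') pH ⟨le_rfl, hypH⟩
  obtain ⟨⟨hpHN, hyN⟩, hmax⟩ := hNmax
  have hsup : Submodule.torsion ℤ H ⊔ N = ⊤ := by
    rw [eq_top_iff]
    intro h _
    by_cases hhN : h ∈ N
    · exact Submodule.mem_sup_right hhN
    -- y ∈ N ⊔ span {h}
    have hyin : y ∈ N ⊔ Submodule.span ℤ {h} := by
      by_contra hynot
      have : N ⊔ Submodule.span ℤ {h} = N := by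
        have := hmax (y := N ⊔ Submodule.span ℤ {h}) ⟨le_trans hpHN le_sup_left, hynot⟩ le_sup_left
        exact le_antisymm this le_sup_left
      exact hhN (this ▸ Submodule.mem_sup_right (Submodule.mem_span_singleton_self h))
    obtain ⟨n, hn, m, hm, hnm⟩ := Submodule.mem_sup.mp hyin
    obtain ⟨k, rfl⟩ := Submodule.mem_span_singleton.mp hm
    by_cases hdvd : (p : ℤ) ∣ k
    · obtain ⟨j, rfl⟩ := hdvd
      exfalso
      apply hyN
      have hin : ((p : ℤ) * j) • h ∈ N := by
        rw [mul_smul]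
        exact hpHN ((hmem _).mpr ⟨j • h, rfl⟩)
      rw [← hnm]
      exact Submodule.add_mem _ hn hin
    · have hcop : IsCoprime (p : ℤ) k :=
        (Nat.prime_iff_prime_int.mp hp).coprime_iff_not_dvd.mpr hdvd
      obtain ⟨a, b, hab⟩ := hcop
      -- h = (a*p + b*k) • h = a • (p • h) + b • (k • h)
      have hph : (p : ℤ) • h ∈ N := hpHN ((hmem _).mpr ⟨h, rfl⟩)
      have hkh : k • h = y - n := by rw [← hnm]; abel
      have : h = a • ((p : ℤ) • h) + b • (y - n) := by
        rw [← hkh, smul_smul, smul_smul, ← add_smul, hab, one_smul]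
      rw [this]
      refine Submodule.add_mem _ (Submodule.mem_sup_right (Submodule.smul_mem _ _ hph)) ?_
      rw [smul_sub]
      exact Submodule.sub_mem _ (Submodule.mem_sup_left (Submodule.smul_mem _ _ hy))
        (Submodule.mem_sup_right (Submodule.smul_mem _ _ hn))
  exact hyN ((hs N hsup) ▸ Submodule.mem_top)

end Aux

section Aux2

variable {H : Type*} [AddCommGroup H]

lemma torsion_nat_div (hs : ∀ N : Submodule ℤ H, Submodule.torsion ℤ H ⊔ N = ⊤ → N = ⊤) :
    ∀ (n : ℕ), 0 < n → ∀ y : H, y ∈ Submodule.torsion ℤ H →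
      ∃ h : H, h ∈ Submodule.torsion ℤ H ∧ (n : ℤ) • h = y := by
  intro n
  induction n using Nat.strong_induction_on with
  | _ n ih =>
    intro hn y hy
    rcases eq_or_ne n 1 with rfl | hne
    · exact ⟨y, hy, one_smul _ _⟩
    · obtain ⟨p, hp, hdvd⟩ := Nat.exists_prime_and_dvd hne
      obtain ⟨m, rfl⟩ := hdvd
      obtain ⟨y₁, hy₁⟩ := torsion_prime_div hs hp hy
      have hy₁T : y₁ ∈ Submodule.torsion ℤ H := by
        obtain ⟨⟨a, ha⟩, hay⟩ := hy
        refine ⟨⟨a * p, mul_mem ha (mem_nonZeroDivisors_iff_ne_zero.mpr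
          (by exact_mod_cast hp.ne_zero))⟩, ?_⟩
        simpa [mul_smul, hy₁] using hay
      have hm : 0 < m := by
        rcases Nat.eq_zero_or_pos m with rfl | h
        · simp at hn
        · exact h
      have hmlt : m < p * m := (Nat.lt_mul_iff_one_lt_left hm).mpr hp.one_lt
      obtain ⟨h, hhT, hh⟩ := ih m hmlt hm y₁ hy₁T
      exact ⟨h, hhT, by rw [Nat.cast_mul, mul_smul, hh, hy₁]⟩

/-- If the torsion submodule is small, it is trivial. -/
lemma torsion_eq_bot_of_small
    (hs : ∀ N : Submodule ℤ H, Submodule.torsion ℤ H ⊔ N = ⊤ → N = ⊤) :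
    Submodule.torsion ℤ H = ⊥ := by
  set T := Submodule.torsion ℤ H with hT
  -- T is divisible
  haveI : DivisibleBy (↥T) ℤ := by
    apply divisibleByOfSMulRightSurj
    intro z hz t
    have hnat : ∀ y : H, y ∈ T → ∃ h : H, h ∈ T ∧ (z.natAbs : ℤ) • h = y :=
      fun y hy => (torsion_nat_div hs z.natAbs (Int.natAbs_pos.mpr hz) y hy)
    obtain ⟨h, hhT, hh⟩ := hnat (t : H) t.2
    rcases Int.natAbs_eq z with he | he
    · refine ⟨⟨h, hhT⟩, ?_⟩
      apply Subtype.ext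
      simpa [← he] using hh
    · refine ⟨⟨-h, neg_mem hhT⟩, ?_⟩
      apply Subtype.ext
      show z • (-h) = (t : H)
      rw [he]
      simpa using hh
  -- T is a direct summand via Baer's criterion
  have hbaer : Module.Baer ℤ (↥T) := Module.Baer.of_divisible _
  obtain ⟨r, hr⟩ := hbaer.extension_property T.subtype T.injective_subtype LinearMap.id
  have hret : ∀ t : ↥T, r (t : H) = t := fun t => congrArg (· t) hr
  have hsup : T ⊔ LinearMap.ker r = ⊤ := by
    rw [eq_top_iff]
    intro h _
    have : h = ((r h : ↥T) : H) + (h - (r h : ↥T)) := by abel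
    rw [this]
    refine Submodule.add_mem _ (Submodule.mem_sup_left (r h).2) (Submodule.mem_sup_right ?_)
    rw [LinearMap.mem_ker, map_sub, hret]
    simp
  have hker := hs _ hsup
  rw [eq_bot_iff]
  intro x hx
  have h1 : r x = 0 := by
    have : x ∈ LinearMap.ker r := by rw [hker]; trivial
    exact this
  have h2 : (⟨x, hx⟩ : ↥T) = 0 := by rw [← hret ⟨x, hx⟩]; exact h1
  simpa using congrArg Subtype.val h2

end Aux2

/-- The torsion subgroup of an abelian group is a coclosed submodule. -/
theorem stmt_2 (G : Type*) [AddCommGroup G] :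
    CoclosedSubmodule ℤ G (Submodule.torsion ℤ G) := by
  intro K hK hsmall
  have hmap : (Submodule.torsion ℤ G).map K.mkQ = Submodule.torsion ℤ (G ⧸ K) := by
    apply le_antisymm
    · rintro _ ⟨g, hg, rfl⟩
      obtain ⟨n, hng⟩ := hg
      refine ⟨n, ?_⟩
      rw [Submonoid.smul_def] at hng ⊢
      rw [← map_zsmul K.mkQ, hng, map_zero]
    · intro x hx
      obtain ⟨g, rfl⟩ := K.mkQ_surjective x
      obtain ⟨n, hn⟩ := hx
      rw [Submonoid.smul_def, ← map_zsmul K.mkQ] at hn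
      have hngK : (n : ℤ) • g ∈ K := by
        rwa [← Submodule.Quotient.mk_eq_zero, ← Submodule.mkQ_apply]
      obtain ⟨m, hm⟩ := hK hngK
      refine ⟨g, ⟨m * n, ?_⟩, rfl⟩
      rw [Submonoid.smul_def] at hm ⊢
      rw [Submonoid.coe_mul, mul_smul]
      exact hm
  rw [hmap] at hsmall
  have hbot : Submodule.torsion ℤ (G ⧸ K) = ⊥ := torsion_eq_bot_of_small hsmall
  refine le_antisymm hK ?_
  intro x hx
  have hmk : K.mkQ x ∈ Submodule.torsion ℤ (G ⧸ K) := by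
    obtain ⟨n, hn⟩ := hx
    refine ⟨n, ?_⟩
    rw [Submonoid.smul_def] at hn ⊢
    rw [← map_zsmul K.mkQ, hn, map_zero]
  rw [hbot, Submodule.mem_bot, Submodule.mkQ_apply, Submodule.Quotient.mk_eq_zero] at hmk
  exact hmk
end

section
/- If M is a simple-direct-projective abelian group, then its torsion subgroup T(M) is simple-direct-projective. -/
/-!
A simple abelian group is killed by a prime `p`, and the torsion subgroup `T` is `p`-pure:
`p • m ∈ T` forces `m ∈ T`. Given `T = B ⊕ C` and `T ⧸ A ≅ B`, purity gives `B ∩ pM = 0` and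
`T ∩ (A + pM) = A`. Since `M ⧸ (A + pM)` is a vector space over `𝔽_p`, the first makes `B` a
direct summand of `M`, and the second yields `X ≤ M` with `X ∩ T = A` and `X + T = M`, so that
`M ⧸ X ≅ T ⧸ A ≅ B`. Hence `M = X ⊕ Y`, and because `T` is fully invariant,
`T = (X ∩ T) ⊕ (Y ∩ T) = A ⊕ (Y ∩ T)`.
-/

open Submodule
open scoped nonZeroDivisors

section FullyInvariant

variable {R M : Type*} [Ring R] [AddCommGroup M] [Module R M]

theorem Submodule.IsFullyInvariant.isCompl_comap_subtype {N X Y : Submodule R M}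
    (hN : N.IsFullyInvariant) (h : IsCompl X Y) :
    IsCompl (X.comap N.subtype) (Y.comap N.subtype) := by
  refine IsCompl.of_eq ?_ ?_
  · rw [← comap_inf, h.inf_eq_bot, comap_bot, ker_subtype]
  · refine eq_top_iff.2 fun t _ ↦ mem_sup.2
      ⟨⟨_, hN (X.projection Y h) t.2⟩, projection_apply_mem h t,
        ⟨_, hN (Y.projection X h.symm) t.2⟩, projection_apply_mem h.symm t,
        Subtype.ext (projection_add_projection_eq_self h t)⟩

end FullyInvariant

section Torsion

variable {R M : Type*} [CommRing R] [AddCommGroup M] [Module R M]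

theorem Submodule.isFullyInvariant_torsion : (torsion R M).IsFullyInvariant :=
  fun f _ ⟨a, ha⟩ ↦ ⟨a, by rw [← f.map_smul_of_tower, ha, map_zero]⟩

theorem Submodule.mem_torsion_of_smul_mem {r : R} (hr : r ∈ R⁰) {m : M}
    (h : r • m ∈ torsion R M) : m ∈ torsion R M := by
  obtain ⟨a, ha⟩ := h
  exact ⟨a * ⟨r, hr⟩, by rwa [mul_smul]⟩

end Torsion

section Semisimple

variable {R M : Type*} [CommRing R] [AddCommGroup M] [Module R M]

theorem isSemisimpleModule_quotient_of_smul_mem {r : R} [(Ideal.span {r}).IsMaximal]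
    {K : Submodule R M} (hK : ∀ m : M, r • m ∈ K) : IsSemisimpleModule R (M ⧸ K) := by
  have hT : Module.IsTorsionBySet R (M ⧸ K) (Ideal.span {r}) :=
    Module.isTorsionBySet_span_singleton_iff r |>.2 <| (Module.isTorsionBy_quotient_iff K r).2 hK
  let := hT.module
  let := Ideal.Quotient.field (Ideal.span {r})
  exact hT.isSemisimpleModule_iff.1 inferInstance

theorem exists_inf_eq_and_sup_eq_top_of_smul_mem {r : R} [(Ideal.span {r}).IsMaximal]
    {A B : Submodule R M} (hAB : A ≤ B) (h : ∀ m : M, r • m ∈ B → r • m ∈ A) :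
    ∃ N : Submodule R M, B ⊓ N = A ∧ B ⊔ N = ⊤ := by
  set K := A ⊔ LinearMap.range (r • LinearMap.id : M →ₗ[R] M)
  have hK : ∀ m : M, r • m ∈ K := fun m ↦ mem_sup_right ⟨m, rfl⟩
  have hBK : B ⊓ K ≤ A := by
    rintro x ⟨hxB, hxK⟩
    obtain ⟨a, ha, _, ⟨m, rfl⟩, rfl⟩ := mem_sup.1 hxK
    have hm : r • m ∈ A := h m (by simpa using B.sub_mem hxB (hAB ha))
    exact A.add_mem ha (by simpa using hm)
  have := isSemisimpleModule_quotient_of_smul_mem hK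
  obtain ⟨W, hW⟩ := exists_isCompl (B.map K.mkQ)
  have hKN : K ≤ W.comap K.mkQ := by
    intro x hx
    simp [(Quotient.mk_eq_zero K).2 hx]
  refine ⟨W.comap K.mkQ, le_antisymm ?_ (le_inf hAB (le_sup_left.trans hKN)), ?_⟩
  · rintro x ⟨hxB, hxW⟩
    have : K.mkQ x = 0 := (mem_bot R).1 (hW.disjoint.le_bot ⟨mem_map_of_mem hxB, hxW⟩)
    exact hBK ⟨hxB, (Quotient.mk_eq_zero K).1 this⟩
  · have hmap : (B ⊔ W.comap K.mkQ).map K.mkQ = ⊤ := by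
      rw [Submodule.map_sup, map_comap_eq_of_surjective K.mkQ_surjective, hW.sup_eq_top]
    have : K ⊔ (B ⊔ W.comap K.mkQ) = ⊤ := by rw [← comap_map_mkQ, hmap, comap_top]
    rwa [sup_eq_right.2 (le_sup_of_le_right hKN)] at this

theorem exists_isCompl_of_smul_mem {r : R} [(Ideal.span {r}).IsMaximal]
    {B : Submodule R M} (h : ∀ m : M, r • m ∈ B → r • m = 0) :
    ∃ N : Submodule R M, IsCompl B N := by
  obtain ⟨N, hinf, hsup⟩ := exists_inf_eq_and_sup_eq_top_of_smul_mem bot_le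
    (r := r) (A := ⊥) (B := B) (by simpa using h)
  exact ⟨N, .of_eq hinf hsup⟩

end Semisimple

theorem IsSimpleModule.exists_isMaximal_span_singleton {R M : Type*} [CommRing R]
    [IsPrincipalIdealRing R] [AddCommGroup M] [Module R M] [IsSimpleModule R M]
    (hR : ¬IsField R) :
    ∃ r : R, r ≠ 0 ∧ (Ideal.span {r}).IsMaximal ∧ ∀ m : M, r • m = 0 := by
  have hI := IsSimpleModule.annihilator_isMaximal (R := R) (M := M)
  set r := IsPrincipal.generator (Module.annihilator R M)
  have hspan : Ideal.span {r} = Module.annihilator R M := Ideal.span_singleton_generator _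
  refine ⟨r, fun hr ↦ hR ?_, hspan ▸ hI, Module.mem_annihilator.1 (IsPrincipal.generator_mem _)⟩
  have := IsSimpleModule.nontrivial R M
  have := Module.nontrivial R M
  rw [← hspan, hr, Ideal.span_singleton_eq_bot.2 rfl] at hI
  exact Ring.isField_iff_maximal_bot.2 hI

section PureSubmodule

variable {R M : Type*} [CommRing R] [AddCommGroup M] [Module R M]

theorem smul_eq_zero_of_smul_mem_of_isCompl {r : R} {B C : Submodule R M} (h : IsCompl B C)
    (hB : ∀ b ∈ B, r • b = 0) {m : M} (hm : r • m ∈ B) : r • m = 0 := by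
  obtain ⟨b, hb, c, hc, rfl⟩ := mem_sup.1 (h.sup_eq_top ▸ mem_top : m ∈ B ⊔ C)
  rw [smul_add, hB b hb, zero_add] at hm ⊢
  exact (mem_bot R).1 (h.disjoint.le_bot ⟨hm, C.smul_mem r hc⟩)

noncomputable def Submodule.quotientComapSubtypeEquivOfSupEqTop {T X : Submodule R M}
    (h : T ⊔ X = ⊤) : (T ⧸ X.comap T.subtype) ≃ₗ[R] M ⧸ X :=
  (quotEquivOfEq _ _ (by rw [LinearMap.ker_comp, ker_mkQ])).trans <|
    (X.mkQ ∘ₗ T.subtype).quotKerEquivOfSurjective fun q ↦ by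
      obtain ⟨m, rfl⟩ := X.mkQ_surjective q
      obtain ⟨t, ht, x, hx, rfl⟩ := mem_sup.1 (h ▸ mem_top : m ∈ T ⊔ X)
      exact ⟨⟨t, ht⟩, by simp [(Quotient.mk_eq_zero X).2 hx]⟩

variable {r : R} [(Ideal.span {r}).IsMaximal] {T : Submodule R M}

theorem exists_isCompl_map_subtype (hT : ∀ m : M, r • m ∈ T → m ∈ T)
    {B C : Submodule R T} (hBC : IsCompl B C) (hB : ∀ b ∈ B, r • b = 0) :
    ∃ N : Submodule R M, IsCompl (B.map T.subtype) N := by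
  refine exists_isCompl_of_smul_mem (r := r) fun m hm ↦ ?_
  have hmT : m ∈ T := hT m (map_subtype_le T B hm)
  obtain ⟨b, hb, hbm⟩ := hm
  have : r • (⟨m, hmT⟩ : T) ∈ B := by
    rwa [show r • (⟨m, hmT⟩ : T) = b from Subtype.ext hbm.symm]
  exact congrArg Subtype.val (smul_eq_zero_of_smul_mem_of_isCompl hBC hB this)

theorem exists_comap_subtype_eq_and_sup_eq_top (hT : ∀ m : M, r • m ∈ T → m ∈ T)
    {A : Submodule R T} (hA : ∀ t : T, r • t ∈ A) :
    ∃ X : Submodule R M, X.comap T.subtype = A ∧ T ⊔ X = ⊤ := by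
  obtain ⟨X, hinf, hsup⟩ := exists_inf_eq_and_sup_eq_top_of_smul_mem (r := r)
    (map_subtype_le T A) fun m hm ↦ ⟨r • ⟨m, hT m hm⟩, hA _, rfl⟩
  refine ⟨X, ?_, hsup⟩
  calc X.comap T.subtype = (T ⊓ X).comap T.subtype := by
        rw [comap_inf, comap_subtype_self, top_inf_eq]
    _ = A := by rw [hinf, comap_map_eq_of_injective T.injective_subtype]

end PureSubmodule

/-- The torsion subgroup of a simple-direct-projective abelian group is
simple-direct-projective. -/
theorem stmt_3 (M : Type*) [AddCommGroup M]
    (hM : SimpleDirectProjective ℤ M) :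
    SimpleDirectProjective ℤ (Submodule.torsion ℤ M) := by
  set T := torsion ℤ M
  rintro A B hB ⟨e⟩ ⟨C, hBC⟩
  obtain ⟨p, hp0, _, hpB⟩ :=
    IsSimpleModule.exists_isMaximal_span_singleton (M := B) Int.not_isField
  have hpure : ∀ m : M, p • m ∈ T → m ∈ T :=
    fun _ ↦ mem_torsion_of_smul_mem (mem_nonZeroDivisors_of_ne_zero hp0)
  have hpA : ∀ t : T, p • t ∈ A := fun t ↦ by
    have : e (Submodule.Quotient.mk (p • t)) = 0 := by rw [Quotient.mk_smul, map_smul, hpB]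
    exact (Quotient.mk_eq_zero A).1 (e.map_eq_zero_iff.1 this)
  obtain ⟨X, hXA, hTX⟩ := exists_comap_subtype_eq_and_sup_eq_top hpure hpA
  obtain ⟨N, hN⟩ :=
    exists_isCompl_map_subtype hpure hBC fun b hb ↦ congrArg Subtype.val (hpB ⟨b, hb⟩)
  let eB := B.equivMapOfInjective T.subtype T.injective_subtype
  have := IsSimpleModule.congr eB.symm
  obtain ⟨Y, hXY⟩ := hM X _ this
    ⟨(quotientComapSubtypeEquivOfSupEqTop hTX).symm ≪≫ₗ quotEquivOfEq _ _ hXA ≪≫ₗ e ≪≫ₗ eB⟩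
    ⟨N, hN⟩
  exact ⟨Y.comap T.subtype, hXA ▸ isFullyInvariant_torsion.isCompl_comap_subtype hXY⟩
end

section
/- Let M be a right R-module such that Soc(M) ⊆ Rad(M) or M/Soc(M) has no maximal submodules. Then M is simple-direct-projective. -/
/-- If `Soc(M) ⊆ Rad(M)` or `M/Soc(M)` has no maximal submodules, then `M` is
simple-direct-projective. -/
theorem stmt_4 {R : Type*} [Ring R] {M : Type*} [AddCommGroup M] [Module R M]
    (h : moduleSocle R M ≤ moduleRad R M ∨
      ∀ P : Submodule R (M ⧸ moduleSocle R M), ¬ IsCoatom P) :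
    SimpleDirectProjective R M := by
  intro A B hB ⟨e⟩ ⟨C, hC⟩
  -- A is a coatom (maximal) since M ⧸ A ≃ B simple
  have hBsimple : IsSimpleModule R B := hB
  have hMA : IsSimpleModule R (M ⧸ A) := IsSimpleModule.congr e
  have hAco : IsCoatom A := isSimpleModule_iff_isCoatom.mp hMA
  -- B ≤ Soc
  have hBsoc : B ≤ moduleSocle R M := le_sSup hB
  -- B ≠ ⊥
  have hBbot : B ≠ ⊥ := (isSimpleModule_iff_isAtom.mp hB).1
  rcases h with h | h
  · -- Soc ≤ Rad: contradiction with B simple direct summand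
    exfalso
    have hMC : IsSimpleModule R (M ⧸ C) :=
      IsSimpleModule.congr ((Submodule.quotientEquivOfIsCompl C B hC.symm).trans
        (LinearEquiv.refl R B)).symm.symm
    have hCco : IsCoatom C := isSimpleModule_iff_isCoatom.mp hMC
    have : B ≤ C := le_trans hBsoc (le_trans h (sInf_le hCco))
    exact hBbot (hC.disjoint.eq_bot_of_le ‹B ≤ C›)
  · -- M/Soc has no maximal submodules: Soc ⊄ A, so some simple S ⊄ A, compl of A
    have hsocA : ¬ moduleSocle R M ≤ A := by
      intro hle
      apply h (A.map (moduleSocle R M).mkQ)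
      rw [← isSimpleModule_iff_isCoatom]
      exact IsSimpleModule.congr
        ((Submodule.quotientQuotientEquivQuotient (moduleSocle R M) A hle).trans e)
    have : ∃ S : Submodule R M, IsSimpleModule R S ∧ ¬ S ≤ A := by
      by_contra hcon
      push_neg at hcon
      exact hsocA (sSup_le fun S hS => hcon S hS)
    obtain ⟨S, hS, hSA⟩ := this
    have hSatom : IsAtom S := isSimpleModule_iff_isAtom.mp hS
    refine ⟨S, ?_, ?_⟩
    · -- disjoint
      rw [disjoint_iff]
      rcases hSatom.le_iff.mp (inf_le_right : A ⊓ S ≤ S) with h1 | h1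
      · exact h1
      · exact absurd (h1 ▸ inf_le_left) hSA
    · -- codisjoint
      rw [codisjoint_iff]
      exact hAco.lt_iff.mp
        (lt_of_le_of_ne le_sup_left (fun he => hSA (le_sup_right.trans he.ge)))
end

section
/- Let M be a torsion abelian group. Then M is simple-direct-projective if and only if the p-primary component T_p(M) is simple-direct-projective for every prime p. -/
open Submodule

section AuxGeneral
variable {R : Type*} [Ring R] {M : Type*} [AddCommGroup M] [Module R M]

lemma quotEquivAux (T A : Submodule R M) (h : T ⊔ A = ⊤) :
    Nonempty ((↥T ⧸ A.comap T.subtype) ≃ₗ[R] (M ⧸ A)) := by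
  have hsurj : Function.Surjective (A.mkQ.comp T.subtype) := by
    intro y
    obtain ⟨x, rfl⟩ := A.mkQ_surjective y
    have hx : x ∈ T ⊔ A := by rw [h]; trivial
    obtain ⟨t, ht, a, ha, rfl⟩ := Submodule.mem_sup.mp hx
    refine ⟨⟨t, ht⟩, ?_⟩
    simp only [LinearMap.comp_apply, Submodule.subtype_apply, Submodule.mkQ_apply]
    exact (Submodule.Quotient.eq A).mpr (by simpa using A.neg_mem ha)
  have hker : LinearMap.ker (A.mkQ.comp T.subtype) = A.comap T.subtype := by
    rw [LinearMap.ker_comp, Submodule.ker_mkQ]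
  exact ⟨(Submodule.quotEquivOfEq _ _ hker.symm).trans
    (LinearMap.quotKerEquivOfSurjective _ hsurj)⟩

lemma isCompl_comap_of_le {T B D : Submodule R M} (hBT : B ≤ T) (h : IsCompl B D) :
    IsCompl (B.comap T.subtype) (D.comap T.subtype) := by
  constructor
  · rw [disjoint_def]
    intro x hxB hxD
    have : (x : M) = 0 := (Submodule.disjoint_def.mp h.disjoint) _ hxB hxD
    exact Subtype.ext this
  · rw [codisjoint_iff, eq_top_iff]
    rintro ⟨x, hxT⟩ -
    have hx : x ∈ B ⊔ D := by rw [h.sup_eq_top]; trivial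
    obtain ⟨b, hb, d, hd, hbd⟩ := Submodule.mem_sup.mp hx
    have hdT : d ∈ T := by
      have : d = x - b := by rw [← hbd]; abel
      rw [this]; exact Submodule.sub_mem _ hxT (hBT hb)
    have : (⟨x, hxT⟩ : ↥T) = ⟨b, hBT hb⟩ + ⟨d, hdT⟩ := by ext; simp [hbd.symm]
    rw [this]
    exact Submodule.add_mem_sup hb hd

lemma isCompl_comap_of_compl {T C A D : Submodule R M} (hCA : C ≤ A) (hTC : IsCompl T C)
    (hAD : IsCompl A D) :
    IsCompl (A.comap T.subtype) ((D ⊔ C).comap T.subtype) := by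
  constructor
  · rw [disjoint_def]
    rintro ⟨x, hxT⟩ hxA hxDC
    simp only [Submodule.mem_comap, Submodule.subtype_apply] at hxA hxDC
    obtain ⟨d, hd, c, hc, hdc⟩ := Submodule.mem_sup.mp hxDC
    have hdA : d ∈ A := by
      have : d = x - c := by rw [← hdc]; abel
      rw [this]; exact Submodule.sub_mem _ hxA (hCA hc)
    have hd0 : d = 0 := (Submodule.disjoint_def.mp hAD.disjoint) _ hdA hd
    have hxC : x ∈ C := by rw [← hdc, hd0, zero_add]; exact hc
    have : x = 0 := (Submodule.disjoint_def.mp hTC.disjoint) _ hxT hxC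
    exact Subtype.ext this
  · rw [codisjoint_iff, eq_top_iff]
    rintro ⟨x, hxT⟩ -
    have hx : x ∈ A ⊔ D := by rw [hAD.sup_eq_top]; trivial
    obtain ⟨a, ha, d, hd, had⟩ := Submodule.mem_sup.mp hx
    have ha' : a ∈ T ⊔ C := by rw [hTC.sup_eq_top]; trivial
    obtain ⟨t, ht, c, hc, htc⟩ := Submodule.mem_sup.mp ha'
    have htA : t ∈ A := by
      have : t = a - c := by rw [← htc]; abel
      rw [this]; exact Submodule.sub_mem _ ha (hCA hc)
    have hcdT : c + d ∈ T := by
      have : c + d = x - t := by rw [← had, ← htc]; abel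
      rw [this]; exact Submodule.sub_mem _ hxT ht
    have hcdDC : c + d ∈ D ⊔ C := Submodule.mem_sup.mpr ⟨d, hd, c, hc, by abel⟩
    have : (⟨x, hxT⟩ : ↥T) = ⟨t, ht⟩ + ⟨c + d, hcdT⟩ := by
      ext; simp; rw [← had, ← htc]; abel
    rw [this]
    exact Submodule.add_mem_sup (by simpa using htA) (by simpa using hcdDC)

lemma isCompl_map_sup {T C : Submodule R M} (hTC : IsCompl T C) {B' D' : Submodule R ↥T}
    (h : IsCompl B' D') : IsCompl (map T.subtype B') (map T.subtype D' ⊔ C) := by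
  constructor
  · rw [disjoint_def]
    intro x hxB hxDC
    obtain ⟨d, hd, c, hc, hdc⟩ := Submodule.mem_sup.mp hxDC
    have hxT : x ∈ T := map_subtype_le T B' hxB
    have hdT : d ∈ T := map_subtype_le T D' hd
    have hcT : c ∈ T := by
      have : c = x - d := by rw [← hdc]; abel
      rw [this]; exact Submodule.sub_mem _ hxT hdT
    have hc0 : c = 0 := (Submodule.disjoint_def.mp hTC.disjoint) _ hcT hc
    have hxd : x = d := by rw [← hdc, hc0, add_zero]
    obtain ⟨y, hy, hyx⟩ := hxB
    obtain ⟨z, hz, hzx⟩ := hd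
    have hyz : y = z := Subtype.ext (by
      simp only [Submodule.subtype_apply] at hyx hzx
      rw [hyx, hzx, ← hxd])
    have hy0 : y = 0 := (Submodule.disjoint_def.mp h.disjoint) y hy (hyz ▸ hz)
    rw [← hyx, hy0, map_zero]
  · rw [codisjoint_iff, ← sup_assoc, ← Submodule.map_sup, codisjoint_iff.mp h.codisjoint,
      Submodule.map_top, Submodule.range_subtype, codisjoint_iff.mp hTC.codisjoint]

end AuxGeneral

section AuxInt

/-- The submonoid of integers coprime to `p`. -/
def coprimeMonoid (p : ℕ) : Submonoid ℤ where
  carrier := {n | IsCoprime n (p : ℤ)}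
  one_mem' := isCoprime_one_left
  mul_mem' := fun h1 h2 => IsCoprime.mul_left h1 h2

/-- Elements annihilated by an integer coprime to `p`. -/
def coComponent (M : Type*) [AddCommGroup M] (p : ℕ) : Submodule ℤ M :=
  Submodule.torsion' ℤ M (coprimeMonoid p)

lemma isCompl_primary (M : Type*) [AddCommGroup M] {p : ℕ} (hp : p.Prime)
    (htor : Submodule.torsion ℤ M = ⊤) :
    IsCompl (primaryComponent M p) (coComponent M p) := by
  constructor
  · rw [disjoint_def]
    intro x hxT hxC
    obtain ⟨⟨q, k, rfl⟩, hq⟩ := (Submodule.mem_torsion'_iff _ _).mp hxT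
    obtain ⟨⟨n, hn⟩, hnx⟩ := (Submodule.mem_torsion'_iff _ _).mp hxC
    have hq : ((p:ℤ)^k) • x = 0 := hq
    have hnx : n • x = 0 := hnx
    have hcop : IsCoprime n ((p : ℤ) ^ k) := IsCoprime.pow_right hn
    obtain ⟨a, b, hab⟩ := hcop
    calc x = (a * n + b * (p:ℤ)^k) • x := by rw [hab, one_smul]
    _ = a • (n • x) + b • ((p:ℤ)^k • x) := by rw [add_smul, mul_smul, mul_smul]
    _ = 0 := by rw [hq, hnx, smul_zero, smul_zero, add_zero]
  · rw [codisjoint_iff, eq_top_iff]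
    rintro x -
    have hx : x ∈ Submodule.torsion ℤ M := by rw [htor]; trivial
    obtain ⟨⟨m, hm⟩, hmx⟩ := (Submodule.mem_torsion_iff _).mp hx
    have hmx : m • x = 0 := hmx
    have hm0 : m ≠ 0 := nonZeroDivisors.ne_zero hm
    set n : ℕ := m.natAbs with hn
    have hn0 : n ≠ 0 := Int.natAbs_ne_zero.mpr hm0
    have hnx : (n : ℤ) • x = 0 := by
      obtain ⟨c, hc⟩ := Int.dvd_natAbs.mpr (dvd_refl m)
      rw [hc, mul_comm, mul_smul, hmx, smul_zero]
    set k : ℕ := n.factorization p with hk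
    set r : ℕ := n / p ^ k with hr
    have hfact : p ^ k * r = n := Nat.ordProj_mul_ordCompl_eq_self n p
    have hndvd : ¬ p ∣ r := Nat.not_dvd_ordCompl hp hn0
    have hcop : Nat.Coprime (p ^ k) r :=
      Nat.Coprime.pow_left _ ((Nat.Prime.coprime_iff_not_dvd hp).mpr hndvd)
    have hcopz : IsCoprime ((p ^ k : ℕ) : ℤ) ((r : ℕ) : ℤ) := Nat.isCoprime_iff_coprime.mpr hcop
    obtain ⟨a, b, hab⟩ := hcopz
    have hdecomp : x = (b * (r : ℤ)) • x + (a * ((p^k : ℕ) : ℤ)) • x := by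
      rw [← add_smul]
      have : b * (r:ℤ) + a * ((p^k : ℕ):ℤ) = 1 := by rw [add_comm]; exact hab
      rw [this, one_smul]
    rw [hdecomp]
    refine Submodule.add_mem_sup ?_ ?_
    · refine (Submodule.mem_torsion'_iff _ _).mpr
        ⟨⟨(p:ℤ)^k, (Submonoid.mem_powers_iff _ _).mpr ⟨k, rfl⟩⟩, ?_⟩
      show ((p:ℤ)^k) • ((b * (r:ℤ)) • x) = 0
      have : ((p:ℤ)^k) • ((b * (r:ℤ)) • x) = b • (((p^k * r : ℕ) : ℤ) • x) := by
        rw [← mul_smul, ← mul_smul]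
        push_cast
        ring_nf
      rw [this, hfact, hnx, smul_zero]
    · have hrp : IsCoprime ((r:ℕ) : ℤ) (p : ℤ) := by
        rw [Nat.isCoprime_iff_coprime]
        exact ((Nat.Prime.coprime_iff_not_dvd hp).mpr hndvd).symm
      refine (Submodule.mem_torsion'_iff _ _).mpr ⟨⟨(r : ℤ), hrp⟩, ?_⟩
      show ((r:ℤ)) • ((a * ((p^k:ℕ):ℤ)) • x) = 0
      have : ((r:ℤ)) • ((a * ((p^k:ℕ):ℤ)) • x) = a • (((p^k * r : ℕ) : ℤ) • x) := by
        rw [← mul_smul, ← mul_smul]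
        push_cast
        ring_nf
      rw [this, hfact, hnx, smul_zero]

lemma exists_prime_ann (N : Type*) [AddCommGroup N] [Module ℤ N] (h : IsSimpleModule ℤ N) :
    ∃ p : ℕ, p.Prime ∧ ∀ x : N, (p : ℤ) • x = 0 := by
  have hmax : (Module.annihilator ℤ N).IsMaximal := IsSimpleModule.annihilator_isMaximal
  obtain ⟨g, hg⟩ := (IsPrincipalIdealRing.principal (Module.annihilator ℤ N)).principal
  have hg' : Module.annihilator ℤ N = Ideal.span {g} := by
    rw [hg]
  have hg0 : g ≠ 0 := by
    rintro rfl
    have hbot : Module.annihilator ℤ N = ⊥ := by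
      rw [hg']; simp [Ideal.span_singleton_eq_bot]
    have h2 : Module.annihilator ℤ N < Ideal.span {(2:ℤ)} := by
      rw [hbot, bot_lt_iff_ne_bot, Ne, Ideal.span_singleton_eq_bot]
      norm_num
    have := hmax.1.2 _ h2
    rw [Ideal.span_singleton_eq_top, Int.isUnit_iff] at this
    norm_num at this
  have hprime : Prime g := by
    rw [← Ideal.span_singleton_prime hg0, ← hg']
    exact hmax.isPrime
  refine ⟨g.natAbs, Int.prime_iff_natAbs_prime.mp hprime, fun x => ?_⟩
  have hmem : ((g.natAbs : ℤ)) ∈ Module.annihilator ℤ N := by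
    rw [hg']
    exact Ideal.mem_span_singleton.mpr (Int.dvd_natAbs.mpr dvd_rfl)
  have h1 := Module.mem_annihilator.mp hmem x
  rw [← int_smul_eq_zsmul ‹Module ℤ N› ((g.natAbs : ℤ)) x]
  exact h1

end AuxInt

/-- A torsion abelian group is simple-direct-projective iff each of its `p`-primary
components is simple-direct-projective. -/
theorem stmt_5 (M : Type*) [AddCommGroup M]
    (htor : Submodule.torsion ℤ M = ⊤) :
    SimpleDirectProjective ℤ M ↔
      ∀ p : ℕ, p.Prime → SimpleDirectProjective ℤ (primaryComponent M p) := by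
  constructor
  · -- forward direction
    intro h p hp
    set T := primaryComponent M p with hTdef
    set C := coComponent M p with hCdef
    have hcompl : IsCompl T C := isCompl_primary M hp htor
    intro A' B' hsB' he hBsum
    obtain ⟨e⟩ := he
    obtain ⟨D', hD'⟩ := hBsum
    set A : Submodule ℤ M := Submodule.map T.subtype A' ⊔ C with hAdef
    set B : Submodule ℤ M := Submodule.map T.subtype B' with hBdef
    have hinj : Function.Injective T.subtype := Submodule.injective_subtype T
    have hcomapA : A.comap T.subtype = A' := by
      have h1 : A ⊓ T = Submodule.map T.subtype A' := by
        rw [hAdef, sup_inf_assoc_of_le C (Submodule.map_subtype_le T A'),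
          (Disjoint.eq_bot (hcompl.symm.disjoint) : C ⊓ T = ⊥), sup_bot_eq]
      have h2 : A.comap T.subtype = (A ⊓ T).comap T.subtype := by
        rw [Submodule.comap_inf, Submodule.comap_subtype_self, inf_top_eq]
      rw [h2, h1, Submodule.comap_map_eq_of_injective hinj]
    have htop : T ⊔ A = ⊤ := by
      rw [eq_top_iff, ← codisjoint_iff.mp hcompl.codisjoint]
      exact sup_le_sup_left le_sup_right T
    obtain ⟨q⟩ := quotEquivAux T A htop
    have hquot : Nonempty ((M ⧸ A) ≃ₗ[ℤ] ↥B) := by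
      have e1 : (↥T ⧸ A.comap T.subtype) ≃ₗ[ℤ] (↥T ⧸ A') :=
        Submodule.quotEquivOfEq (A.comap T.subtype) A' hcomapA
      have e2 : ↥B' ≃ₗ[ℤ] ↥B :=
        Submodule.equivMapOfInjective T.subtype hinj B'
      exact ⟨q.symm.trans (e1.trans (e.trans e2))⟩
    have hsB : IsSimpleModule ℤ ↥B := by
      haveI := hsB'
      exact IsSimpleModule.congr (Submodule.equivMapOfInjective T.subtype hinj B').symm
    have hBsum' : IsDirectSummand ℤ M B :=
      ⟨Submodule.map T.subtype D' ⊔ C, isCompl_map_sup hcompl hD'⟩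
    obtain ⟨D, hD⟩ := h A B hsB hquot hBsum'
    exact ⟨(D ⊔ C).comap T.subtype,
      hcomapA ▸ isCompl_comap_of_compl le_sup_right hcompl hD⟩
  · -- backward direction
    intro h A B hsB he hBsum
    obtain ⟨e⟩ := he
    haveI := hsB
    obtain ⟨p, hp, hpann⟩ := exists_prime_ann ↥B hsB
    set T := primaryComponent M p with hTdef
    set C := coComponent M p with hCdef
    have hcompl : IsCompl T C := isCompl_primary M hp htor
    have hBT : B ≤ T := by
      intro x hx
      refine (Submodule.mem_torsion'_iff _ _).mpr ⟨⟨(p:ℤ), Submonoid.mem_powers _⟩, ?_⟩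
      show (p:ℤ) • x = 0
      have := congrArg Subtype.val (hpann ⟨x, hx⟩)
      simpa using this
    have hCA : C ≤ A := by
      intro x hx
      obtain ⟨⟨n, hn⟩, hnx⟩ := (Submodule.mem_torsion'_iff _ _).mp hx
      have hnx : n • x = 0 := hnx
      have h1 : n • (A.mkQ x) = 0 := by rw [← map_smul, hnx, map_zero]
      have h2 : (p:ℤ) • (A.mkQ x) = 0 := by
        have h3 : e ((p:ℤ) • A.mkQ x) = 0 := by
          rw [LinearEquiv.map_smul e ((p:ℤ)) (A.mkQ x)]
          exact hpann (e (A.mkQ x))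
        have h4 : e ((p:ℤ) • A.mkQ x) = e 0 := by rw [h3, map_zero]
        exact e.injective h4
      obtain ⟨a, b, hab⟩ := hn
      have hzero : A.mkQ x = 0 := by
        calc A.mkQ x = (a * n + b * (p:ℤ)) • A.mkQ x := by rw [hab, one_smul]
        _ = a • (n • A.mkQ x) + b • ((p:ℤ) • A.mkQ x) := by rw [add_smul, mul_smul, mul_smul]
        _ = 0 := by rw [h1, h2, smul_zero, smul_zero, add_zero]
      rwa [Submodule.mkQ_apply, Submodule.Quotient.mk_eq_zero] at hzero
    have htop : T ⊔ A = ⊤ := by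
      rw [eq_top_iff, ← codisjoint_iff.mp hcompl.codisjoint]
      exact sup_le_sup_left hCA T
    set A' : Submodule ℤ ↥T := A.comap T.subtype with hA'def
    set B' : Submodule ℤ ↥T := B.comap T.subtype with hB'def
    obtain ⟨q⟩ := quotEquivAux T A htop
    have eqB : ↥B' ≃ₗ[ℤ] ↥B := Submodule.comapSubtypeEquivOfLe hBT
    have hsB' : IsSimpleModule ℤ ↥B' := IsSimpleModule.congr eqB
    have hquot : Nonempty ((↥T ⧸ A') ≃ₗ[ℤ] ↥B') := ⟨q.trans (e.trans eqB.symm)⟩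
    have hB'sum : IsDirectSummand ℤ ↥T B' := by
      obtain ⟨D, hD⟩ := hBsum
      exact ⟨D.comap T.subtype, isCompl_comap_of_le hBT hD⟩
    obtain ⟨C', hC'⟩ := h p hp A' B' hsB' hquot hB'sum
    refine ⟨Submodule.map T.subtype C', ?_⟩
    constructor
    · rw [disjoint_def]
      intro x hxA hxC
      obtain ⟨y, hy, hyx⟩ := hxC
      have hyA : y ∈ A' := by
        show (y : M) ∈ A
        have hyx' : (y : M) = x := hyx
        rw [hyx']; exact hxA
      have hy0 : y = 0 := (Submodule.disjoint_def.mp hC'.disjoint) y hyA hy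
      rw [← hyx, hy0, map_zero]
    · have h3 : Submodule.map T.subtype A' ⊔ Submodule.map T.subtype C' = T := by
        rw [← Submodule.map_sup, codisjoint_iff.mp hC'.codisjoint,
          Submodule.map_top, Submodule.range_subtype]
      have h4 : Submodule.map T.subtype A' ≤ A := by
        rw [hA'def, Submodule.map_comap_subtype]
        exact inf_le_right
      have h5 : T ≤ A ⊔ Submodule.map T.subtype C' := by
        exact le_trans h3.ge (sup_le (h4.trans le_sup_left) le_sup_right)
      rw [codisjoint_iff, eq_top_iff]
      exact le_trans htop.ge (sup_le h5 le_sup_left)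
end

section
/- Let R be a local ring and M a right R-module. Then M is simple-direct-projective if and only if Soc(M) ⊆ Rad(M) or M/Soc(M) has no maximal submodules. -/
/-- In a (possibly noncommutative) local ring, any two maximal left ideals coincide. -/
lemma maxLeftIdeal_unique {R : Type*} [Ring R] [IsLocalRing R]
    {I J : Ideal R} (hI : I.IsMaximal) (hJ : J.IsMaximal) : I = J := by
  have hcI : IsCoatom I := Ideal.isMaximal_def.mp hI
  have hcJ : IsCoatom J := Ideal.isMaximal_def.mp hJ
  by_contra hne
  have hsup : I ⊔ J = ⊤ := by
    rcases eq_or_lt_of_le (le_sup_left : I ≤ I ⊔ J) with h | h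
    · exfalso
      have hJI : J ≤ I := sup_eq_left.mp h.symm
      exact hcI.1 (hcJ.2 I (lt_of_le_of_ne hJI fun e => hne e.symm))
    · exact hcI.2 _ h
  have h1 : (1 : R) ∈ I ⊔ J := hsup ▸ Submodule.mem_top
  obtain ⟨a, ha, b, hb, hab⟩ := Submodule.mem_sup.mp h1
  rcases IsLocalRing.isUnit_or_isUnit_of_add_one hab with h | h
  · exact hcI.1 (I.eq_top_of_isUnit_mem ha h)
  · exact hcJ.1 (J.eq_top_of_isUnit_mem hb h)

/-- Over a local ring, any two simple modules are isomorphic. -/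
lemma simpleEquiv_of_local {R : Type*} [Ring R] [IsLocalRing R]
    {M N : Type*} [AddCommGroup M] [Module R M] [AddCommGroup N] [Module R N]
    (hM : IsSimpleModule R M) (hN : IsSimpleModule R N) : Nonempty (M ≃ₗ[R] N) := by
  obtain ⟨I, hI, ⟨e⟩⟩ := isSimpleModule_iff_quot_maximal.mp hM
  obtain ⟨J, hJ, ⟨f⟩⟩ := isSimpleModule_iff_quot_maximal.mp hN
  obtain rfl := maxLeftIdeal_unique hI hJ
  exact ⟨e.trans f.symm⟩

lemma isCompl_of_coatom_atom {R : Type*} [Ring R]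
    {M : Type*} [AddCommGroup M] [Module R M] {A S : Submodule R M}
    (hA : IsCoatom A) (hS : IsAtom S) (h : ¬ S ≤ A) : IsCompl A S := by
  constructor
  · rw [disjoint_iff]
    exact hS.2 _ (lt_of_le_of_ne inf_le_right fun e => h (e ▸ inf_le_left))
  · rw [codisjoint_iff]
    exact hA.2 _ (lt_of_le_of_ne le_sup_left fun e => h (e ▸ le_sup_right))

/-- Over a local ring, `M` is simple-direct-projective iff `Soc(M) ⊆ Rad(M)` or
`M/Soc(M)` has no maximal submodules. -/
theorem stmt_9 {R : Type*} [Ring R] [IsLocalRing R]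
    {M : Type*} [AddCommGroup M] [Module R M] :
    SimpleDirectProjective R M ↔
      (moduleSocle R M ≤ moduleRad R M ∨
        ∀ P : Submodule R (M ⧸ moduleSocle R M), ¬ IsCoatom P) := by
  constructor
  · intro hSDP
    by_contra hcon
    push_neg at hcon
    obtain ⟨hrad, P, hP⟩ := hcon
    -- find a simple submodule `S` not contained in the radical
    have h1 : ¬ ∀ S ∈ {S : Submodule R M | IsSimpleModule R S}, S ≤ moduleRad R M :=
      fun h => hrad (sSup_le h)
    push_neg at h1
    obtain ⟨S, hSsimple, hSrad⟩ := h1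
    have hSsimple' : IsSimpleModule R S := hSsimple
    -- find a coatom `K` not containing `S`
    have h2 : ¬ ∀ K ∈ {K : Submodule R M | IsCoatom K}, S ≤ K := by
      intro h
      exact hSrad (le_sInf h)
    push_neg at h2
    obtain ⟨K, hKco, hSK⟩ := h2
    have hScompl : IsCompl K S :=
      isCompl_of_coatom_atom hKco (isSimpleModule_iff_isAtom.mp hSsimple') hSK
    -- the preimage `A` of `P` in `M`
    have soc_def : moduleSocle R M = moduleSocle R M := rfl
    set A := P.comap (moduleSocle R M).mkQ with hAdef
    have hsocA : moduleSocle R M ≤ A := by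
      intro x hx
      have : (moduleSocle R M).mkQ x = 0 := (Submodule.Quotient.mk_eq_zero _).mpr hx
      simp only [hAdef, Submodule.mem_comap, this]
      exact P.zero_mem
    have hmap : A.map (moduleSocle R M).mkQ = P :=
      Submodule.map_comap_eq_self (by rw [Submodule.range_mkQ]; exact le_top)
    have hAco : IsCoatom A := by
      rw [← isSimpleModule_iff_isCoatom]
      haveI hPs : IsSimpleModule R (((M ⧸ moduleSocle R M)) ⧸ A.map (moduleSocle R M).mkQ) := by
        rw [hmap]; exact isSimpleModule_iff_isCoatom.mpr hP
      exact IsSimpleModule.congr (Submodule.quotientQuotientEquivQuotient (moduleSocle R M) A hsocA).symm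
    haveI hAsimple : IsSimpleModule R (M ⧸ A) := isSimpleModule_iff_isCoatom.mpr hAco
    obtain ⟨g⟩ : Nonempty ((M ⧸ A) ≃ₗ[R] S) := simpleEquiv_of_local hAsimple hSsimple'
    obtain ⟨C, hC⟩ := hSDP A S hSsimple' ⟨g⟩ ⟨K, hScompl.symm⟩
    haveI hCsimple : IsSimpleModule R C :=
      IsSimpleModule.congr (Submodule.quotientEquivOfIsCompl A C hC).symm
    have hCsoc : C ≤ moduleSocle R M := le_sSup (show C ∈ {S : Submodule R M | IsSimpleModule R S} from hCsimple)
    have hCA : C ≤ A := le_trans hCsoc hsocA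
    have hCbot : C = ⊥ := le_bot_iff.mp (hC.disjoint hCA le_rfl)
    have hAtop : A = ⊤ := by
      have h3 := hC.codisjoint
      rw [codisjoint_iff, hCbot, sup_bot_eq] at h3
      exact h3
    exact hAco.1 hAtop
  · rintro (hcase | hcase) A B hBsimple ⟨e⟩ ⟨C, hBC⟩
    · exfalso
      have hBatom : IsAtom B := isSimpleModule_iff_isAtom.mp hBsimple
      have hCco : IsCoatom C := hBC.isAtom_iff_isCoatom.mp hBatom
      have hBrad : B ≤ moduleRad R M :=
        le_trans (le_sSup (show B ∈ {S : Submodule R M | IsSimpleModule R S} from hBsimple)) hcase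
      have hBC' : B ≤ C :=
        le_trans hBrad (sInf_le (show C ∈ {K : Submodule R M | IsCoatom K} from hCco))
      exact hBatom.1 (le_bot_iff.mp (hBC.disjoint le_rfl hBC'))
    · haveI := hBsimple
      haveI hAq : IsSimpleModule R (M ⧸ A) := IsSimpleModule.congr e
      have hAco : IsCoatom A := isSimpleModule_iff_isCoatom.mp hAq
      have hnot : ¬ moduleSocle R M ≤ A := by
        intro hle
        apply hcase (A.map (moduleSocle R M).mkQ)
        rw [← isSimpleModule_iff_isCoatom]
        exact IsSimpleModule.congr (Submodule.quotientQuotientEquivQuotient _ A hle)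
      have h1 : ¬ ∀ S ∈ {S : Submodule R M | IsSimpleModule R S}, S ≤ A :=
        fun h => hnot (sSup_le h)
      push_neg at h1
      obtain ⟨S, hSsimple, hSA⟩ := h1
      have hSsimple' : IsSimpleModule R S := hSsimple
      exact ⟨S, isCompl_of_coatom_atom hAco (isSimpleModule_iff_isAtom.mp hSsimple') hSA⟩
end

section
/- A ring R is semilocal if and only if every right R-module M with Rad(M) = 0 is simple-direct-projective. -/
section Aux

variable {R : Type*} [Ring R] {M : Type*} [AddCommGroup M] [Module R M]
variable {N : Type*} [AddCommGroup N] [Module R N]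

lemma smul_mem_moduleRad' {r : R} (hr : r ∈ (⊥ : Ideal R).jacobson) (x : M) :
    r • x ∈ moduleRad R M := by
  rw [moduleRad, Submodule.mem_sInf]
  intro c hc
  by_cases hx : x ∈ c
  · exact c.smul_mem r hx
  · haveI : IsSimpleModule R (M ⧸ c) := isSimpleModule_iff_isCoatom.2 hc
    set f : R →ₗ[R] M ⧸ c := c.mkQ ∘ₗ LinearMap.toSpanSingleton R M x with hf
    have hsurj : Function.Surjective f := by
      rw [← LinearMap.range_eq_top]
      have h1 : LinearMap.range f = (Submodule.span R {x}).map c.mkQ := by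
        rw [hf, LinearMap.range_comp, LinearMap.span_singleton_eq_range]
      rw [h1, Submodule.map_mkQ_eq_top]
      exact hc.2 _ (lt_of_le_of_ne le_sup_left
        (fun h => hx (h ▸ (le_sup_right : Submodule.span R {x} ≤ c ⊔ _)
          (Submodule.mem_span_singleton_self x))))
    have hker : IsCoatom (LinearMap.ker f) := LinearMap.isCoatom_ker_of_surjective hsurj
    have hrk : r ∈ LinearMap.ker f :=
      Submodule.mem_sInf.1 hr _ ⟨bot_le, Ideal.isMaximal_def.2 hker⟩
    have : f r = 0 := hrk
    have h2 : c.mkQ (r • x) = 0 := this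
    rwa [Submodule.mkQ_apply, Submodule.Quotient.mk_eq_zero] at h2

lemma semisimple_of_rad_bot (hs : IsSemisimpleModule R (R ⧸ (⊥ : Ideal R).jacobson))
    (h : moduleRad R M = ⊥) : IsSemisimpleModule R M := by
  haveI := hs
  apply isSemisimpleModule_of_isSemisimpleModule_submodule'
    (p := fun x : M => Submodule.span R {x})
  · intro x
    set f := LinearMap.toSpanSingleton R M x with hfdef
    have hJ : ((⊥ : Ideal R).jacobson : Submodule R R) ≤ LinearMap.ker f := by
      intro r hr
      have := smul_mem_moduleRad' hr x
      rw [h, Submodule.mem_bot] at this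
      simpa [LinearMap.mem_ker, hfdef] using this
    have e1 : (R ⧸ LinearMap.ker f) ≃ₗ[R] Submodule.span R {x} :=
      f.quotKerEquivRange.trans
        (LinearEquiv.ofEq _ _ (LinearMap.span_singleton_eq_range R M x).symm)
    have e2 : ((R ⧸ ((⊥ : Ideal R).jacobson : Submodule R R)) ⧸
        (LinearMap.ker f).map ((⊥ : Ideal R).jacobson : Submodule R R).mkQ) ≃ₗ[R]
        R ⧸ LinearMap.ker f :=
      Submodule.quotientQuotientEquivQuotient _ _ hJ
    exact IsSemisimpleModule.congr ((e2.trans e1).symm)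
  · rw [eq_top_iff]
    intro y _
    exact Submodule.mem_iSup_of_mem y (Submodule.mem_span_singleton_self y)

lemma apply_mem_moduleRad {P : Type*} [AddCommGroup P] [Module R P]
    (f : M →ₗ[R] P) (hf : Function.Surjective f) {x : M} (hx : x ∈ moduleRad R M) :
    f x ∈ moduleRad R P := by
  rw [moduleRad, Submodule.mem_sInf]
  intro c hc
  haveI : IsSimpleModule R (P ⧸ c) := isSimpleModule_iff_isCoatom.2 hc
  have hcoat : IsCoatom (LinearMap.ker (c.mkQ ∘ₗ f)) :=
    LinearMap.isCoatom_ker_of_surjective ((c.mkQ_surjective).comp hf)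
  have hxk : x ∈ LinearMap.ker (c.mkQ ∘ₗ f) := by
    rw [moduleRad, Submodule.mem_sInf] at hx
    exact hx _ hcoat
  have : c.mkQ (f x) = 0 := hxk
  rwa [Submodule.mkQ_apply, Submodule.Quotient.mk_eq_zero] at this

lemma moduleRad_prod_bot (hM : moduleRad R M = ⊥) (hN : moduleRad R N = ⊥) :
    moduleRad R (M × N) = ⊥ := by
  rw [eq_bot_iff]
  intro x hx
  have h1' : (LinearMap.fst R M N) x = 0 := by
    have := apply_mem_moduleRad (LinearMap.fst R M N) Prod.fst_surjective hx
    rwa [hM, Submodule.mem_bot] at this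
  have h2' : (LinearMap.snd R M N) x = 0 := by
    have := apply_mem_moduleRad (LinearMap.snd R M N) (fun n => ⟨(0, n), rfl⟩) hx
    rwa [hN, Submodule.mem_bot] at this
  have h1 : x.1 = 0 := h1'
  have h2 : x.2 = 0 := h2'
  simp [Submodule.mem_bot, Prod.ext_iff, h1, h2]

lemma moduleRad_of_simple [IsSimpleModule R M] : moduleRad R M = ⊥ :=
  le_bot_iff.1 (sInf_le (isCoatom_bot))

lemma isCoatom_map_mkQ {J m : Submodule R M} (hm : IsCoatom m) (hJm : J ≤ m) :
    IsCoatom (m.map J.mkQ) := by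
  rw [← isSimpleModule_iff_isCoatom]
  haveI : IsSimpleModule R (M ⧸ m) := isSimpleModule_iff_isCoatom.2 hm
  exact IsSimpleModule.congr (Submodule.quotientQuotientEquivQuotient J m hJm)

lemma moduleRad_quot_jacobson_bot :
    moduleRad R (R ⧸ ((⊥ : Ideal R).jacobson : Submodule R R)) = ⊥ := by
  set J := ((⊥ : Ideal R).jacobson : Submodule R R)
  rw [eq_bot_iff]
  intro x hx
  obtain ⟨r, rfl⟩ := J.mkQ_surjective x
  have hr : r ∈ (⊥ : Ideal R).jacobson := by
    rw [Ideal.jacobson, Submodule.mem_sInf]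
    rintro m ⟨-, hm⟩
    have hJm : J ≤ m := sInf_le ⟨bot_le, hm⟩
    have hc : IsCoatom ((m : Submodule R R).map J.mkQ) :=
      isCoatom_map_mkQ (Ideal.isMaximal_def.1 hm) hJm
    rw [moduleRad, Submodule.mem_sInf] at hx
    have := hx _ hc
    have h2 : r ∈ Submodule.comap J.mkQ ((m : Submodule R R).map J.mkQ) := this
    rwa [Submodule.comap_map_mkQ, sup_eq_right.2 hJm] at h2
  rwa [Submodule.mem_bot, Submodule.mkQ_apply, Submodule.Quotient.mk_eq_zero]

end Aux

section Main

variable {R : Type u} [Ring R]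

lemma socle_sup_coatom {Q : Type u} [AddCommGroup Q] [Module R Q]
    (hradQ : moduleRad R Q = ⊥)
    (H : ∀ (M : Type u) [AddCommGroup M] [Module R M],
      moduleRad R M = ⊥ → SimpleDirectProjective R M)
    {c : Submodule R Q} (hc : IsCoatom c) :
    moduleSocle R Q ⊔ c = ⊤ := by
  haveI hsimp : IsSimpleModule R (Q ⧸ c) := isSimpleModule_iff_isCoatom.2 hc
  have hradM : moduleRad R (Q × (Q ⧸ c)) = ⊥ := moduleRad_prod_bot hradQ moduleRad_of_simple
  have hSDP := H (Q × (Q ⧸ c)) hradM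
  set A : Submodule R (Q × (Q ⧸ c)) := Submodule.comap (LinearMap.fst R Q (Q ⧸ c)) c with hA
  set Bs : Submodule R (Q × (Q ⧸ c)) := LinearMap.range (LinearMap.inr R Q (Q ⧸ c)) with hBs
  have eB : (Q ⧸ c) ≃ₗ[R] Bs := LinearEquiv.ofInjective _ LinearMap.inr_injective
  haveI hBsimp : IsSimpleModule R Bs := IsSimpleModule.congr eB.symm
  have hBsum : IsDirectSummand R (Q × (Q ⧸ c)) Bs :=
    ⟨LinearMap.range (LinearMap.inl R Q (Q ⧸ c)), (LinearMap.isCompl_range_inl_inr).symm⟩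
  set f : (Q × (Q ⧸ c)) →ₗ[R] Q ⧸ c := c.mkQ ∘ₗ LinearMap.fst R Q (Q ⧸ c) with hf
  have hfsurj : Function.Surjective f := c.mkQ_surjective.comp LinearMap.fst_surjective
  have hker : LinearMap.ker f = A := by rw [hf, LinearMap.ker_comp, Submodule.ker_mkQ]
  have equiv : ((Q × (Q ⧸ c)) ⧸ A) ≃ₗ[R] Bs :=
    ((Submodule.quotEquivOfEq _ _ hker.symm).trans (f.quotKerEquivOfSurjective hfsurj)).trans eB
  obtain ⟨C, hC⟩ := hSDP A Bs hBsimp ⟨equiv⟩ hBsum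
  set D := Submodule.map (LinearMap.fst R Q (Q ⧸ c)) C with hD
  have hsup : c ⊔ D = ⊤ := by
    have h1 : Submodule.map (LinearMap.fst R Q (Q ⧸ c)) (A ⊔ C) = ⊤ := by
      rw [hC.sup_eq_top, Submodule.map_top, LinearMap.range_eq_top]
      exact LinearMap.fst_surjective
    rw [Submodule.map_sup] at h1
    have h2 : Submodule.map (LinearMap.fst R Q (Q ⧸ c)) A ≤ c := Submodule.map_comap_le _ _
    exact top_le_iff.1 (h1 ▸ sup_le_sup_right h2 D)
  have hdisj : Disjoint c D := by
    rw [Submodule.disjoint_def]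
    intro x hxc hxD
    obtain ⟨y, hyC, hy⟩ := hxD
    have hyA : y ∈ A := by
      have : (LinearMap.fst R Q (Q ⧸ c)) y ∈ c := hy ▸ hxc
      exact this
    have hy0 : y = 0 := Submodule.disjoint_def.1 hC.disjoint y hyA hyC
    rw [← hy, hy0]
    rfl
  have hcompl : IsCompl c D := ⟨hdisj, codisjoint_iff.2 hsup⟩
  have eD : (Q ⧸ c) ≃ₗ[R] D := Submodule.quotientEquivOfIsCompl c D hcompl
  haveI hDsimp : IsSimpleModule R D := IsSimpleModule.congr eD.symm
  have hDle : D ≤ moduleSocle R Q := le_sSup hDsimp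
  rw [eq_top_iff, ← hsup]
  exact sup_le le_sup_right (le_trans hDle le_sup_left)

end Main

set_option maxHeartbeats 800000 in
lemma socle_quot_eq_top {R : Type*} [Ring R] {J : Submodule R R}
    (hJ : ∀ m : Ideal R, m.IsMaximal → J ≤ m)
    (hsoc : ∀ c : Submodule R (R ⧸ J), IsCoatom c → moduleSocle R (R ⧸ J) ⊔ c = ⊤) :
    moduleSocle R (R ⧸ J) = ⊤ := by
  by_contra hne
  have hmapI : Submodule.map J.mkQ (Submodule.comap J.mkQ (moduleSocle R (R ⧸ J)))
      = moduleSocle R (R ⧸ J) :=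
    Submodule.map_comap_eq_self (by rw [Submodule.range_mkQ]; exact le_top)
  have hIproper : (Submodule.comap J.mkQ (moduleSocle R (R ⧸ J)) : Ideal R) ≠ ⊤ := by
    intro h
    apply hne
    rw [← hmapI, h, Submodule.map_top, Submodule.range_mkQ]
  obtain ⟨m, hmmax, hIm⟩ := Ideal.exists_le_maximal _ hIproper
  have hc : IsCoatom (Submodule.map J.mkQ m) :=
    isCoatom_map_mkQ (Ideal.isMaximal_def.1 hmmax) (hJ m hmmax)
  have hsocle_le : moduleSocle R (R ⧸ J) ≤ Submodule.map J.mkQ m := by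
    rw [← hmapI]
    exact Submodule.map_mono hIm
  have htop := hsoc _ hc
  rw [sup_eq_right.2 hsocle_le] at htop
  exact hc.1 htop

/-- A ring `R` is semilocal (i.e. `R/J(R)` is semisimple) iff every right module
with zero radical is simple-direct-projective. -/
theorem stmt_10 (R : Type u) [Ring R] :
    IsSemisimpleModule R (R ⧸ (⊥ : Ideal R).jacobson) ↔
      ∀ (M : Type u) [AddCommGroup M] [Module R M],
        moduleRad R M = ⊥ → SimpleDirectProjective R M := by
  constructor
  · intro hs M _ _ hrad
    haveI := semisimple_of_rad_bot hs hrad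
    intro A B _ _ _
    exact exists_isCompl A
  · intro H
    apply IsSemisimpleModule.of_sSup_simples_eq_top
    have hradQ : moduleRad R (R ⧸ ((⊥ : Ideal R).jacobson : Submodule R R)) = ⊥ :=
      moduleRad_quot_jacobson_bot
    have hsoc : ∀ c : Submodule R (R ⧸ ((⊥ : Ideal R).jacobson : Submodule R R)),
        IsCoatom c → moduleSocle R (R ⧸ ((⊥ : Ideal R).jacobson : Submodule R R)) ⊔ c = ⊤ :=
      fun c hc => socle_sup_coatom hradQ H hc
    show moduleSocle R (R ⧸ ((⊥ : Ideal R).jacobson : Submodule R R)) = ⊤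
    exact socle_quot_eq_top (fun m hm => sInf_le ⟨bot_le, hm⟩) hsoc
end

section
/- Let R be a Prüfer domain. An R-module M is simple-direct-injective if and only if its torsion submodule T(M) is simple-direct-injective. -/
/-!
Over a Prüfer domain the torsion submodule `T` is pure: `T ∩ I M = I T` for every ideal `I`.
For finitely generated, hence projective, `I` this comes from a dual basis of `I`, which splits
an expression `t = ∑ aᵢ xᵢ` as `t = ∑ₑ e yₑ` with every `yₑ` killed by the annihilator of `t`
times any nonzero `a₀ ∈ I`.

A simple submodule `A` with maximal annihilator `m` is a direct summand as soon as
`A ∩ m M = 0`, because `M / m M` is a vector space over `R / m`. If `A ⊕ C = T`, purity gives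
`A ∩ m M ⊆ m T = m C ⊆ C`, so a simple direct summand of `T` is a direct summand of `M`.
Conversely a summand of `M` inside `T` is a summand of `T` by modularity. Every simple submodule
is torsion except when `R` is a field, where all submodules are summands; so the simple submodules
and their splitting behaviour are the same in `M` and in `T`.
-/

open Submodule

section Torsion

variable {R : Type*} [CommRing R] {M : Type*} [AddCommGroup M] [Module R M]

theorem Submodule.exists_fg_le_and_mem_smul {I : Ideal R} {N : Submodule R M} {x : M}
    (hx : x ∈ I • N) : ∃ J : Ideal R, J.FG ∧ J ≤ I ∧ x ∈ J • N := by
  refine smul_induction_on hx (fun r hr n hn ↦ ⟨Ideal.span {r}, fg_span_singleton r,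
    (Ideal.span_singleton_le_iff_mem I).mpr hr,
    smul_mem_smul (Ideal.mem_span_singleton_self r) hn⟩) ?_
  rintro x y ⟨J, hJ, hJI, hxJ⟩ ⟨K, hK, hKI, hyK⟩
  exact ⟨J ⊔ K, Submodule.FG.sup hJ hK, sup_le hJI hKI,
    add_mem (smul_mono_left le_sup_left hxJ) (smul_mono_left le_sup_right hyK)⟩

theorem Ideal.coe_mul_apply_comm {I : Ideal R} (φ : I →ₗ[R] R) (x z : I) :
    (x : R) * φ z = z * φ x := by
  rw [← smul_eq_mul, ← smul_eq_mul, ← map_smul, ← map_smul]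
  exact congrArg φ (Subtype.ext (mul_comm _ _))

theorem exists_finsupp_of_mem_ideal_smul_top {I : Ideal R} (s : I →ₗ[R] I →₀ R)
    (hs : Function.LeftInverse (Finsupp.linearCombination R id) s) (a₀ : I) {t : M}
    (ht : t ∈ I • (⊤ : Submodule R M)) :
    ∃ y : I →₀ M, (y.sum fun e m ↦ (e : R) • m) = t ∧ ∀ e, (a₀ : R) • y e = s a₀ e • t := by
  refine smul_induction_on ht (fun a ha x _ ↦ ?_) ?_
  · refine ⟨(s ⟨a, ha⟩).mapRange (· • x) (zero_smul R x), ?_, fun e ↦ ?_⟩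
    · have h := congrArg (fun z : I ↦ (z : R) • x) (hs ⟨a, ha⟩)
      simp only [Finsupp.linearCombination_apply, Finsupp.sum, id, coe_sum, coe_smul, smul_eq_mul,
        Finset.sum_smul] at h
      rw [Finsupp.sum_mapRange_index (fun _ ↦ smul_zero _), ← h]
      simp only [Finsupp.sum, smul_smul, mul_comm]
    · have := Ideal.coe_mul_apply_comm (Finsupp.lapply e ∘ₗ s) a₀ ⟨a, ha⟩
      simp only [LinearMap.coe_comp, Function.comp_apply, Finsupp.lapply_apply] at this
      simp only [Finsupp.mapRange_apply, smul_smul, this, mul_comm]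
  · rintro t t' ⟨y, rfl, hy⟩ ⟨y', rfl, hy'⟩
    refine ⟨y + y', Finsupp.sum_add_index' (fun _ ↦ smul_zero _) fun _ ↦ smul_add _, fun e ↦ ?_⟩
    simp only [Finsupp.add_apply, smul_add, hy, hy']

variable [IsDomain R]

theorem torsion_inf_smul_top_le_of_projective (I : Ideal R) [Module.Projective R I] :
    torsion R M ⊓ I • ⊤ ≤ I • torsion R M := by
  rintro t ⟨ht, htI⟩
  rcases eq_or_ne I ⊥ with rfl | hI
  · simp_all
  obtain ⟨a₀, ha₀I, ha₀⟩ := exists_mem_ne_zero_of_ne_bot hI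
  obtain ⟨s, hs⟩ := Module.projective_def.mp ‹Module.Projective R I›
  obtain ⟨y, rfl, hy⟩ := exists_finsupp_of_mem_ideal_smul_top s hs ⟨a₀, ha₀I⟩ htI
  obtain ⟨r, hr⟩ := (mem_torsion_iff _).mp ht
  refine sum_mem fun e _ ↦ smul_mem_smul e.2 ((mem_torsion_iff _).mpr
    ⟨⟨r * a₀, mul_mem r.2 (mem_nonZeroDivisors_of_ne_zero ha₀)⟩, ?_⟩)
  rw [Submonoid.smul_def, mul_smul, hy, smul_comm, ← Submonoid.smul_def, hr, smul_zero]

theorem torsion_inf_smul_top_eq (hPrufer : ∀ I : Ideal R, I.FG → Module.Projective R I)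
    (I : Ideal R) : torsion R M ⊓ I • ⊤ = I • torsion R M := by
  refine le_antisymm (fun t ⟨ht, htI⟩ ↦ ?_) (le_inf smul_le_right (smul_mono_right I le_top))
  obtain ⟨J, hJ, hJI, htJ⟩ := exists_fg_le_and_mem_smul htI
  have := hPrufer J hJ
  exact smul_mono_left hJI (torsion_inf_smul_top_le_of_projective J ⟨ht, htJ⟩)

theorem le_torsion_of_annihilator_ne_bot {A : Submodule R M} (hA : A.annihilator ≠ ⊥) :
    A ≤ torsion R M := by
  intro x hx
  rw [← SetLike.mem_coe, coe_torsion_eq_annihilator_ne_bot]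
  exact fun h ↦ hA (eq_bot_iff.mpr (h ▸ annihilator_mono ((span_singleton_le_iff_mem x A).mpr hx)))

end Torsion

section DirectSummands

variable {R : Type*} [CommRing R] {M : Type*} [AddCommGroup M] [Module R M]

theorem isDirectSummand_of_disjoint_smul_top {m : Ideal R} (hm : m.IsMaximal)
    {A : Submodule R M} (hA : Disjoint A (m • ⊤)) : IsDirectSummand R M A := by
  let Q : Submodule R M := m • ⊤
  let _ := Ideal.Quotient.field m
  have : IsSemisimpleModule R (M ⧸ Q) :=
    (Module.isTorsionBySet_quotient_ideal_smul M m).isSemisimpleModule_iff.mp inferInstance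
  obtain ⟨N, hN⟩ := exists_isCompl (A.map Q.mkQ)
  refine ⟨N.comap Q.mkQ, ?_, ?_⟩
  · rw [disjoint_iff, eq_bot_iff]
    intro x ⟨hxA, hxN⟩
    have hx : Q.mkQ x = 0 := (disjoint_iff_inf_le.mp hN.disjoint) ⟨mem_map_of_mem hxA, hxN⟩
    exact (disjoint_iff_inf_le.mp hA) ⟨hxA, (Quotient.mk_eq_zero Q).mp hx⟩
  · have hQ : Q ≤ A ⊔ N.comap Q.mkQ := fun x hx ↦
      mem_sup_right (by simp [(Quotient.mk_eq_zero Q).mpr hx])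
    have : map Q.mkQ (A ⊔ N.comap Q.mkQ) = ⊤ := by
      rw [Submodule.map_sup, map_comap_eq_of_surjective Q.mkQ_surjective, hN.sup_eq_top]
    rw [codisjoint_iff, ← sup_eq_right.mpr hQ, ← map_mkQ_eq_top, this]

theorem isDirectSummand_of_disjoint_of_sup_eq {T A C : Submodule R M} [IsSimpleModule R A]
    (hAC : Disjoint A C) (hT : A ⊔ C = T)
    (hpure : T ⊓ A.annihilator • ⊤ ≤ A.annihilator • T) : IsDirectSummand R M A := by
  refine isDirectSummand_of_disjoint_smul_top (IsSimpleModule.annihilator_isMaximal (M := A)) ?_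
  have hAT : A ≤ T := hT ▸ le_sup_left
  rw [disjoint_iff_inf_le]
  calc A ⊓ A.annihilator • ⊤
      ≤ A ⊓ (T ⊓ A.annihilator • ⊤) := le_inf inf_le_left (inf_le_inf_right _ hAT)
    _ ≤ A ⊓ A.annihilator • T := inf_le_inf_left _ hpure
    _ = A ⊓ A.annihilator • C := by rw [← hT, smul_sup, annihilator_smul, bot_sup_eq]
    _ ≤ A ⊓ C := inf_le_inf_left _ smul_le_right
    _ ≤ ⊥ := hAC.le_bot

theorem isDirectSummand_comap_subtype_iff {T A : Submodule R M} [IsSimpleModule R A]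
    (hAT : A ≤ T) (hpure : T ⊓ A.annihilator • ⊤ ≤ A.annihilator • T) :
    IsDirectSummand R T (A.comap T.subtype) ↔ IsDirectSummand R M A := by
  refine ⟨fun ⟨C, hC⟩ ↦ ?_, fun ⟨D, hD⟩ ↦ ⟨_, isCompl_comap_subtype_of_isCompl_of_le hD hAT⟩⟩
  rw [T.mapIic.isCompl_iff, Set.Iic.isCompl_iff] at hC
  simp only [coe_mapIic_apply, map_comap_subtype, inf_eq_right.mpr hAT] at hC
  exact isDirectSummand_of_disjoint_of_sup_eq hC.1 hC.2 hpure

end DirectSummands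

/-- Over a Prüfer domain (a commutative domain in which every finitely generated ideal
is projective), a module is simple-direct-injective iff its torsion submodule is. -/
theorem stmt_13 {R : Type*} [CommRing R] [IsDomain R]
    (hPrufer : ∀ I : Ideal R, I.FG → Module.Projective R I)
    (M : Type*) [AddCommGroup M] [Module R M] :
    SimpleDirectInjective R M ↔ SimpleDirectInjective R (Submodule.torsion R M) := by
  set T := torsion R M
  have hpure (I : Ideal R) : T ⊓ I • ⊤ ≤ I • T := (torsion_inf_smul_top_eq hPrufer I).le
  constructor
  · intro hM A B hA hB ⟨e⟩ hBs
    let eA := equivMapOfInjective T.subtype T.injective_subtype A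
    let eB := equivMapOfInjective T.subtype T.injective_subtype B
    have := IsSimpleModule.congr eA.symm
    have := IsSimpleModule.congr eB.symm
    rw [← comap_map_eq_of_injective T.injective_subtype A,
      isDirectSummand_comap_subtype_iff (map_subtype_le T A) (hpure _)]
    rw [← comap_map_eq_of_injective T.injective_subtype B,
      isDirectSummand_comap_subtype_iff (map_subtype_le T B) (hpure _)] at hBs
    exact hM _ _ ‹_› ‹_› ⟨eA.symm ≪≫ₗ e ≪≫ₗ eB⟩ hBs
  · intro hT A B hA hB ⟨e⟩ hBs
    by_cases hann : A.annihilator = ⊥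
    · exact isDirectSummand_of_disjoint_smul_top (IsSimpleModule.annihilator_isMaximal (M := A))
        (by simp [hann])
    have hAT := le_torsion_of_annihilator_ne_bot hann
    have hBT := le_torsion_of_annihilator_ne_bot fun h ↦ hann (e.annihilator_eq.trans h)
    rw [← isDirectSummand_comap_subtype_iff hAT (hpure _)]
    rw [← isDirectSummand_comap_subtype_iff hBT (hpure _)] at hBs
    let eA := comapSubtypeEquivOfLe hAT
    let eB := comapSubtypeEquivOfLe hBT
    exact hT _ _ (IsSimpleModule.congr eA) (IsSimpleModule.congr eB) ⟨eA ≪≫ₗ e ≪≫ₗ eB.symm⟩ hBs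
end

section
/- Let M be a module and N a coclosed submodule of M. If M is simple-direct-injective, then N is simple-direct-injective. Conversely, if Soc(M) ⊆ N and N is simple-direct-injective, then M is simple-direct-injective. -/
section Aux
variable {R : Type*} [Ring R] {M : Type*} [AddCommGroup M] [Module R M]

/-- The image of a small submodule under a surjective linear map is small. -/
lemma smallSubmodule_map {M' : Type*} [AddCommGroup M'] [Module R M'] (f : M →ₗ[R] M')
    (hf : Function.Surjective f) {S : Submodule R M} (hS : SmallSubmodule R M S) :
    SmallSubmodule R M' (S.map f) := by
  intro T hT
  have h : S ⊔ T.comap f = ⊤ := by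
    rw [eq_top_iff]
    intro m _
    have hm : f m ∈ S.map f ⊔ T := hT ▸ Submodule.mem_top
    obtain ⟨y, hy, z, hz, hyz⟩ := Submodule.mem_sup.mp hm
    obtain ⟨s, hs, rfl⟩ := hy
    refine Submodule.mem_sup.mpr ⟨s, hs, m - s, ?_, by abel⟩
    simp only [Submodule.mem_comap, map_sub]
    rw [← hyz]; simpa using hz
  have h2 := hS _ h
  rw [eq_top_iff]
  intro m' _
  obtain ⟨m, rfl⟩ := hf m'
  have : m ∈ T.comap f := h2 ▸ Submodule.mem_top
  exact this

/-- A simple submodule that is not small is a direct summand. -/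
lemma summand_of_simple_not_small {S : Submodule R M} (hs : IsSimpleModule R S)
    (h : ¬ SmallSubmodule R M S) : IsDirectSummand R M S := by
  simp only [SmallSubmodule, not_forall] at h
  obtain ⟨K, hsup, hK⟩ := h
  rcases eq_bot_or_eq_top ((S ⊓ K).comap S.subtype) with hb | ht
  · refine ⟨K, ?_, codisjoint_iff.mpr hsup⟩
    rw [disjoint_iff, eq_bot_iff]
    intro x hx
    have : (⟨x, hx.1⟩ : S) ∈ (S ⊓ K).comap S.subtype := hx
    rw [hb] at this
    simpa using congrArg (Submodule.subtype S) (Submodule.mem_bot R |>.mp this)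
  · exfalso
    apply hK
    have hSK : S ≤ K := by
      intro s hsS
      have : (⟨s, hsS⟩ : S) ∈ (S ⊓ K).comap S.subtype := ht ▸ Submodule.mem_top
      exact this.2
    rw [← hsup, sup_eq_right.mpr hSK]

/-- A direct summand of `M` contained in `N` is a direct summand of `N`. -/
lemma summand_of_le {N A : Submodule R M} (hAN : A ≤ N) (h : IsDirectSummand R M A) :
    IsDirectSummand R N (A.comap N.subtype) := by
  obtain ⟨C, hC⟩ := h
  refine ⟨C.comap N.subtype, ?_, ?_⟩
  · rw [disjoint_iff, eq_bot_iff]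
    intro x hx
    have : (x : M) ∈ A ⊓ C := ⟨hx.1, hx.2⟩
    rw [disjoint_iff.mp hC.1] at this
    exact Subtype.ext (by simpa using this)
  · rw [codisjoint_iff, eq_top_iff]
    intro x _
    have : (x : M) ∈ A ⊔ C := codisjoint_iff.mp hC.2 ▸ Submodule.mem_top
    obtain ⟨a, ha, c, hc, hac⟩ := Submodule.mem_sup.mp this
    have haN : a ∈ N := hAN ha
    have hcN : c ∈ N := by
      have : c = (x : M) - a := by rw [← hac]; abel
      rw [this]; exact N.sub_mem x.2 haN
    refine Submodule.mem_sup.mpr ⟨⟨a, haN⟩, ha, ⟨c, hcN⟩, hc, ?_⟩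
    exact Subtype.ext hac

/-- If `S ⊔ D = N`, `S ⊓ D = ⊥`, `S ≠ ⊥`, `N` coclosed, then `S` is not small in `M`. -/
lemma not_small_of_coclosed {N : Submodule R M} (hN : CoclosedSubmodule R M N)
    {S D : Submodule R M} (hSne : S ≠ ⊥) (hD : D ≤ N) (hsup : S ⊔ D = N)
    (hdis : S ⊓ D = ⊥) : ¬ SmallSubmodule R M S := by
  intro hsmall
  have hmap : N.map D.mkQ = S.map D.mkQ := by
    rw [← hsup, Submodule.map_sup]
    have : D.map D.mkQ = ⊥ := by
      rw [eq_bot_iff]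
      rintro x ⟨d, hd, rfl⟩
      simpa [Submodule.Quotient.mk_eq_zero] using hd
    rw [this, sup_bot_eq]
  have hDN : D = N := by
    apply hN D hD
    rw [hmap]
    exact smallSubmodule_map D.mkQ (Submodule.mkQ_surjective D) hsmall
  apply hSne
  have hSle : S ≤ D := hDN ▸ (hsup ▸ le_sup_left)
  rw [← hdis, inf_eq_left.mpr hSle]
end Aux

/-- A coclosed submodule of a simple-direct-injective module is simple-direct-injective;
conversely, if a coclosed submodule `N` contains the socle and is
simple-direct-injective, then so is `M`. -/
theorem stmt_14 {R : Type*} [Ring R] {M : Type*} [AddCommGroup M] [Module R M]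
    (N : Submodule R M) (hN : CoclosedSubmodule R M N) :
    (SimpleDirectInjective R M → SimpleDirectInjective R N) ∧
    (moduleSocle R M ≤ N → SimpleDirectInjective R N → SimpleDirectInjective R M) := by
  constructor
  · intro hM A B hA hB he hBs
    obtain ⟨e⟩ := he
    obtain ⟨C, hC⟩ := hBs
    set A' := A.map N.subtype with hA'def
    set B' := B.map N.subtype with hB'def
    set D := C.map N.subtype with hDdef
    have eA : (↥A) ≃ₗ[R] ↥A' := Submodule.equivMapOfInjective N.subtype N.injective_subtype A
    have eB : (↥B) ≃ₗ[R] ↥B' := Submodule.equivMapOfInjective N.subtype N.injective_subtype B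
    have hA' : IsSimpleModule R A' := by
      haveI := hA; exact IsSimpleModule.congr eA.symm
    have hB' : IsSimpleModule R B' := by
      haveI := hB; exact IsSimpleModule.congr eB.symm
    have hB'ne : B' ≠ ⊥ := by
      haveI := hB'
      exact Submodule.nontrivial_iff_ne_bot.mp (IsSimpleModule.nontrivial R _)
    have hsupM : B' ⊔ D = N := by
      rw [hB'def, hDdef, ← Submodule.map_sup, codisjoint_iff.mp hC.2,
        Submodule.map_subtype_top]
    have hdisM : B' ⊓ D = ⊥ := by
      rw [hB'def, hDdef, ← Submodule.map_inf _ N.injective_subtype,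
        disjoint_iff.mp hC.1, Submodule.map_bot]
    have hnotsmall : ¬ SmallSubmodule R M B' :=
      not_small_of_coclosed hN hB'ne (Submodule.map_subtype_le N C) hsupM hdisM
    have hB'sum : IsDirectSummand R M B' := summand_of_simple_not_small hB' hnotsmall
    have hA'sum : IsDirectSummand R M A' :=
      hM A' B' hA' hB' ⟨eA.symm.trans (e.trans eB)⟩ hB'sum
    have := summand_of_le (Submodule.map_subtype_le N A) hA'sum
    rwa [Submodule.comap_map_eq_of_injective N.injective_subtype] at this
  · intro hsoc hsdi A B hA hB he hBs
    obtain ⟨e⟩ := he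
    have hAle : A ≤ N := le_trans (le_sSup (show A ∈ {S : Submodule R M | IsSimpleModule R S} from hA)) hsoc
    have hBle : B ≤ N := le_trans (le_sSup (show B ∈ {S : Submodule R M | IsSimpleModule R S} from hB)) hsoc
    set A₀ := A.comap N.subtype with hA₀def
    set B₀ := B.comap N.subtype with hB₀def
    have hmapA : A₀.map N.subtype = A := by
      rw [hA₀def, Submodule.map_comap_subtype, inf_eq_right.mpr hAle]
    have hmapB : B₀.map N.subtype = B := by
      rw [hB₀def, Submodule.map_comap_subtype, inf_eq_right.mpr hBle]
    have eA : (↥A₀) ≃ₗ[R] ↥A :=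
      (Submodule.equivMapOfInjective N.subtype N.injective_subtype A₀).trans
        (LinearEquiv.ofEq _ _ hmapA)
    have eB : (↥B₀) ≃ₗ[R] ↥B :=
      (Submodule.equivMapOfInjective N.subtype N.injective_subtype B₀).trans
        (LinearEquiv.ofEq _ _ hmapB)
    have hA₀ : IsSimpleModule R A₀ := by haveI := hA; exact IsSimpleModule.congr eA
    have hB₀ : IsSimpleModule R B₀ := by haveI := hB; exact IsSimpleModule.congr eB
    have hB₀sum : IsDirectSummand R N B₀ := summand_of_le hBle hBs
    obtain ⟨C, hC⟩ := hsdi A₀ B₀ hA₀ hB₀ ⟨eA.trans (e.trans eB.symm)⟩ hB₀sum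
    set D := C.map N.subtype with hDdef
    have hsupM : A ⊔ D = N := by
      rw [← hmapA, hDdef, ← Submodule.map_sup, codisjoint_iff.mp hC.2,
        Submodule.map_subtype_top]
    have hdisM : A ⊓ D = ⊥ := by
      rw [← hmapA, hDdef, ← Submodule.map_inf _ N.injective_subtype,
        disjoint_iff.mp hC.1, Submodule.map_bot]
    have hAne : A ≠ ⊥ := by
      haveI := hA
      exact Submodule.nontrivial_iff_ne_bot.mp (IsSimpleModule.nontrivial R _)
    exact summand_of_simple_not_small hA
      (not_small_of_coclosed hN hAne (Submodule.map_subtype_le N C) hsupM hdisM)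
end

section
/- An abelian group M is simple-direct-injective if and only if for each prime p, the p-primary component T_p(M) is either semisimple or satisfies Soc(T_p(M)) ⊆ Rad(T_p(M)). -/
section Aux

variable {N : Type*} [AddCommGroup N]

lemma aux_bezout {p : ℕ} (hp : p.Prime) {k : ℤ} (hk : ¬ (p:ℤ) ∣ k) :
    ∃ a b : ℤ, a * k + b * (p:ℤ) = 1 := by
  have h1 : ¬ p ∣ k.natAbs := by
    intro h
    exact hk (Int.natCast_dvd.mpr h)
  have hcop : Nat.Coprime p k.natAbs := (Nat.Prime.coprime_iff_not_dvd hp).mpr h1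
  have : Int.gcd k (p:ℤ) = 1 := by
    unfold Int.gcd
    simpa [Nat.coprime_comm] using hcop.symm
  have hb := Int.gcd_eq_gcd_ab k (p:ℤ)
  rw [this] at hb
  exact ⟨Int.gcdA k (p:ℤ), Int.gcdB k (p:ℤ), by push_cast at hb; linarith⟩

lemma aux_mem_span_of_not_dvd {p : ℕ} (hp : p.Prime) {x : N} (hpx : (p:ℤ) • x = 0)
    {k : ℤ} (hk : ¬ (p:ℤ) ∣ k) : x ∈ Submodule.span ℤ {k • x} := by
  obtain ⟨a, b, hab⟩ := aux_bezout hp hk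
  have : x = a • (k • x) := by
    have : (a * k + b * (p:ℤ)) • x = x := by rw [hab, one_smul]
    rw [add_smul, mul_smul, mul_smul, hpx, smul_zero, add_zero] at this
    exact this.symm
  have hmem : a • (k • x) ∈ Submodule.span ℤ {k • x} :=
    Submodule.smul_mem _ _ (Submodule.mem_span_singleton_self _)
  rwa [← this] at hmem

lemma aux_smul_eq_zero {p : ℕ} {x : N} (hpx : (p:ℤ) • x = 0)
    {k : ℤ} (hk : (p:ℤ) ∣ k) : k • x = 0 := by
  obtain ⟨c, rfl⟩ := hk
  rw [mul_comm, mul_smul, hpx, smul_zero]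

lemma aux_isAtom_span {p : ℕ} (hp : p.Prime) {x : N} (hx : x ≠ 0) (hpx : (p:ℤ) • x = 0) :
    IsAtom (Submodule.span ℤ {x}) := by
  constructor
  · intro h
    apply hx
    have hm : x ∈ Submodule.span ℤ {x} := Submodule.mem_span_singleton_self x
    rw [h] at hm
    simpa using hm
  · intro b hb
    by_contra hne
    obtain ⟨z, hzb, hz0⟩ := Submodule.exists_mem_ne_zero_of_ne_bot hne
    obtain ⟨k, rfl⟩ := Submodule.mem_span_singleton.mp (hb.le hzb)
    by_cases hdvd : (p:ℤ) ∣ k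
    · exact hz0 (aux_smul_eq_zero hpx hdvd)
    · have hxb : x ∈ b := by
        have := aux_mem_span_of_not_dvd hp hpx hdvd
        exact (Submodule.span_le.mpr (Set.singleton_subset_iff.mpr hzb)) this
      exact hb.ne (le_antisymm hb.le (Submodule.span_le.mpr (Set.singleton_subset_iff.mpr hxb)))

lemma aux_isSimple_span {p : ℕ} (hp : p.Prime) {x : N} (hx : x ≠ 0) (hpx : (p:ℤ) • x = 0) :
    IsSimpleModule ℤ (Submodule.span ℤ {x}) :=
  isSimpleModule_iff_isAtom.mpr (aux_isAtom_span hp hx hpx)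

end Aux

section Aux2

variable {N : Type*} [AddCommGroup N]

lemma aux_not_psmul_of_summand {p : ℕ} {x : N} (hx : x ≠ 0) (hpx : (p:ℤ) • x = 0)
    (h : IsDirectSummand ℤ N (Submodule.span ℤ {x})) : ¬ ∃ y : N, x = (p:ℤ) • y := by
  obtain ⟨C, hC⟩ := h
  rintro ⟨y, hy⟩
  have hytop : y ∈ Submodule.span ℤ {x} ⊔ C := by
    rw [hC.sup_eq_top]; trivial
  obtain ⟨s, hs, c, hc, hsc⟩ := Submodule.mem_sup.mp hytop
  obtain ⟨k, rfl⟩ := Submodule.mem_span_singleton.mp hs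
  have hxc : x ∈ C := by
    have : x = (p:ℤ) • c := by
      rw [hy, ← hsc, smul_add, smul_comm, hpx, smul_zero, zero_add]
    rw [this]; exact Submodule.smul_mem _ _ hc
  have : x = 0 :=
    (Submodule.disjoint_def.mp hC.disjoint) x (Submodule.mem_span_singleton_self x) hxc
  exact hx this

lemma aux_summand_of_not_psmul {p : ℕ} (hp : p.Prime) {x : N} (hpx : (p:ℤ) • x = 0)
    (h : ¬ ∃ y : N, x = (p:ℤ) • y) : IsDirectSummand ℤ N (Submodule.span ℤ {x}) := by
  classical
  set s : Set (Submodule ℤ N) := {C | (∀ m : N, (p:ℤ) • m ∈ C) ∧ x ∉ C} with hs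
  -- base element
  have hC₀ : LinearMap.range ((p:ℤ) • (LinearMap.id : N →ₗ[ℤ] N)) ∈ s := by
    constructor
    · intro m; exact ⟨m, rfl⟩
    · intro hxm
      obtain ⟨y, hy⟩ := hxm
      exact h ⟨y, by simpa using hy.symm⟩
  obtain ⟨C, -, hCs, hCmax⟩ := zorn_le_nonempty₀ s (fun c hcs hchain y hyc => by
    refine ⟨sSup c, ⟨?_, ?_⟩, fun z hz => le_sSup hz⟩
    · intro m
      exact (le_sSup hyc) ((hcs hyc).1 m)
    · intro hxc
      have hdir : DirectedOn (· ≤ ·) c := hchain.directedOn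
      obtain ⟨D, hDc, hxD⟩ := (Submodule.mem_sSup_of_directed ⟨y, hyc⟩ hdir).mp hxc
      exact (hcs hDc).2 hxD) _ hC₀
  refine ⟨C, ?_, ?_⟩
  · -- disjoint
    rw [Submodule.disjoint_def]
    intro z hzspan hzC
    obtain ⟨k, rfl⟩ := Submodule.mem_span_singleton.mp hzspan
    by_cases hdvd : (p:ℤ) ∣ k
    · exact aux_smul_eq_zero hpx hdvd
    · exact absurd ((Submodule.span_le.mpr (Set.singleton_subset_iff.mpr hzC))
        (aux_mem_span_of_not_dvd hp hpx hdvd)) hCs.2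
  · -- codisjoint
    rw [codisjoint_iff, eq_top_iff]
    intro m _
    by_cases hmC : m ∈ C
    · exact Submodule.mem_sup_right hmC
    · have hCD : C < C ⊔ Submodule.span ℤ {m} := by
        refine lt_of_le_of_ne le_sup_left (fun hEq => hmC ?_)
        rw [hEq]
        exact Submodule.mem_sup_right (Submodule.mem_span_singleton_self m)
      have hDns : C ⊔ Submodule.span ℤ {m} ∉ s := fun hmem =>
        hCD.ne (le_antisymm hCD.le (hCmax hmem hCD.le))
      have hxD : x ∈ C ⊔ Submodule.span ℤ {m} := by
        by_contra hxD
        exact hDns ⟨fun n => Submodule.mem_sup_left (hCs.1 n), hxD⟩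
      obtain ⟨cc, hcc, z, hz, hsum⟩ := Submodule.mem_sup.mp hxD
      obtain ⟨k, rfl⟩ := Submodule.mem_span_singleton.mp hz
      by_cases hdvd : (p:ℤ) ∣ k
      · exfalso
        apply hCs.2
        have hkm : k • m ∈ C := by
          obtain ⟨c', rfl⟩ := hdvd
          rw [mul_comm, mul_smul]
          exact Submodule.smul_mem _ _ (hCs.1 m)
        rw [← hsum]
        exact Submodule.add_mem _ hcc hkm
      · obtain ⟨a, b, hab⟩ := aux_bezout hp hdvd
        have : m = a • (k • m) + b • ((p:ℤ) • m) := by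
          rw [← mul_smul, ← mul_smul, ← add_smul, hab, one_smul]
        rw [this]
        refine Submodule.add_mem _ ?_
          (Submodule.mem_sup_right (Submodule.smul_mem _ _ (hCs.1 m)))
        have hkmx : k • m = x - cc := by rw [← hsum]; abel
        rw [hkmx, smul_sub]
        exact Submodule.sub_mem _
          (Submodule.mem_sup_left (Submodule.smul_mem _ _ (Submodule.mem_span_singleton_self x)))
          (Submodule.mem_sup_right (Submodule.smul_mem _ _ hcc))

end Aux2
section Aux3

variable {N : Type*} [AddCommGroup N]

lemma aux_ker_toSpanSingleton {p : ℕ} (hp : p.Prime) {x : N} (hx : x ≠ 0)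
    (hpx : (p:ℤ) • x = 0) :
    LinearMap.ker (LinearMap.toSpanSingleton ℤ N x) = Submodule.span ℤ {(p:ℤ)} := by
  ext k
  simp only [LinearMap.mem_ker, LinearMap.toSpanSingleton_apply,
    Submodule.mem_span_singleton]
  constructor
  · intro hk
    by_cases hdvd : (p:ℤ) ∣ k
    · obtain ⟨c, rfl⟩ := hdvd
      exact ⟨c, by simp [smul_eq_mul, mul_comm]⟩
    · exfalso
      apply hx
      have := aux_mem_span_of_not_dvd hp hpx hdvd
      rw [hk] at this
      simpa using this
  · rintro ⟨a, rfl⟩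
    exact aux_smul_eq_zero hpx ⟨a, mul_comm _ _⟩

/-- Two elements of exact prime order `p` span isomorphic submodules. -/
noncomputable def auxEquivSpan {p : ℕ} (hp : p.Prime) {x y : N} (hx : x ≠ 0) (hy : y ≠ 0)
    (hpx : (p:ℤ) • x = 0) (hpy : (p:ℤ) • y = 0) :
    (Submodule.span ℤ {x}) ≃ₗ[ℤ] (Submodule.span ℤ {y}) :=
  letI f := LinearMap.toSpanSingleton ℤ N x
  letI g := LinearMap.toSpanSingleton ℤ N y
  letI e₁ : (ℤ ⧸ LinearMap.ker f) ≃ₗ[ℤ] LinearMap.range f := f.quotKerEquivRange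
  letI e₂ : (ℤ ⧸ LinearMap.ker g) ≃ₗ[ℤ] LinearMap.range g := g.quotKerEquivRange
  letI eq : (ℤ ⧸ LinearMap.ker f) ≃ₗ[ℤ] (ℤ ⧸ LinearMap.ker g) :=
    Submodule.quotEquivOfEq _ _
      ((aux_ker_toSpanSingleton hp hx hpx).trans (aux_ker_toSpanSingleton hp hy hpy).symm)
  (LinearEquiv.ofEq _ _ (LinearMap.span_singleton_eq_range ℤ N x)).trans <|
    e₁.symm.trans <| eq.trans <| e₂.trans
      (LinearEquiv.ofEq _ _ (LinearMap.span_singleton_eq_range ℤ N y).symm)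

/-- In a simple submodule whose elements are `p`-power torsion, every element is killed by `p`. -/
lemma aux_psmul_eq_zero_of_mem_simple {p : ℕ} (hp : p.Prime) {S : Submodule ℤ N}
    (hS : IsSimpleModule ℤ S) {z : N} (hz : z ∈ S) {n : ℕ} (hn : (p:ℤ) ^ n • z = 0) :
    (p:ℤ) • z = 0 := by
  classical
  by_cases hz0 : z = 0
  · rw [hz0, smul_zero]
  have hatom : IsAtom S := isSimpleModule_iff_isAtom.mp hS
  have hex : ∃ m : ℕ, (p:ℤ) ^ m • z = 0 := ⟨n, hn⟩
  set m := Nat.find hex with hm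
  have hmspec : (p:ℤ) ^ m • z = 0 := Nat.find_spec hex
  have hm0 : m ≠ 0 := by
    intro h
    rw [h, pow_zero, one_smul] at hmspec
    exact hz0 hmspec
  rcases Nat.lt_or_ge 1 m with hm2 | hm1
  · -- m ≥ 2
    set z' := (p:ℤ) ^ (m - 1) • z with hz'
    have hz'0 : z' ≠ 0 := Nat.find_min hex (by omega)
    have hpz' : (p:ℤ) • z' = 0 := by
      rw [hz', ← mul_smul, ← pow_succ']
      have : m - 1 + 1 = m := by omega
      rw [this]; exact hmspec
    have hz'S : z' ∈ S := Submodule.smul_mem _ _ hz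
    have hspan : Submodule.span ℤ {z'} = S := by
      rcases lt_or_eq_of_le (Submodule.span_le.mpr (Set.singleton_subset_iff.mpr hz'S)) with h | h
      · exfalso
        apply hz'0
        have := hatom.2 _ h
        have hmem : z' ∈ (⊥ : Submodule ℤ N) := this ▸ Submodule.mem_span_singleton_self z'
        simpa using hmem
      · exact h
    have hzspan : z ∈ Submodule.span ℤ {z'} := hspan.symm ▸ hz
    obtain ⟨k, hk⟩ := Submodule.mem_span_singleton.mp hzspan
    rw [← hk, smul_comm, hpz', smul_zero]
  · -- m = 1
    have : m = 1 := by omega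
    rw [this, pow_one] at hmspec
    exact hmspec

/-- A simple submodule is spanned by an element of prime order. -/
lemma aux_exists_gen {B : Submodule ℤ N} (hB : IsSimpleModule ℤ B) :
    ∃ (p : ℕ), p.Prime ∧ ∃ b : N, b ≠ 0 ∧ (p:ℤ) • b = 0 ∧ B = Submodule.span ℤ {b} := by
  classical
  have hatom : IsAtom B := isSimpleModule_iff_isAtom.mp hB
  obtain ⟨b₀, hb₀B, hb₀⟩ := Submodule.exists_mem_ne_zero_of_ne_bot hatom.1
  have span_eq : ∀ z : N, z ∈ B → z ≠ 0 → Submodule.span ℤ {z} = B := by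
    intro z hzB hz0
    rcases lt_or_eq_of_le (Submodule.span_le.mpr (Set.singleton_subset_iff.mpr hzB)) with h | h
    · exfalso
      apply hz0
      have := hatom.2 _ h
      have hmem : z ∈ (⊥ : Submodule ℤ N) := this ▸ Submodule.mem_span_singleton_self z
      simpa using hmem
    · exact h
  -- b₀ is torsion
  have htors : ∃ m : ℕ, 0 < m ∧ (m:ℤ) • b₀ = 0 := by
    by_contra hfree
    push_neg at hfree
    have h2 : (2:ℤ) • b₀ ≠ 0 := by
      intro h
      exact (hfree 2 (by norm_num)) (by exact_mod_cast h)
    have hspan2 : Submodule.span ℤ {(2:ℤ) • b₀} = B :=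
      span_eq _ (Submodule.smul_mem _ _ hb₀B) h2
    have : b₀ ∈ Submodule.span ℤ {(2:ℤ) • b₀} := hspan2.symm ▸ hb₀B
    obtain ⟨k, hk⟩ := Submodule.mem_span_singleton.mp this
    have : (2 * k - 1 : ℤ) • b₀ = 0 := by
      rw [sub_smul, mul_smul, one_smul]
      rw [smul_comm] at hk
      rw [hk, sub_self]
    have h21 : (2 * k - 1 : ℤ) = 0 := by
      by_contra hne
      rcases Int.lt_or_lt_of_ne hne with hlt | hgt
      · have := hfree (2 * k - 1).natAbs (by omega)
        apply this
        rw [Int.natCast_natAbs, abs_of_neg hlt, neg_smul, ‹(2 * k - 1 : ℤ) • b₀ = 0›, neg_zero]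
      · have := hfree (2 * k - 1).natAbs (by omega)
        apply this
        rw [Int.natCast_natAbs, abs_of_pos hgt]
        exact ‹(2 * k - 1 : ℤ) • b₀ = 0›
    omega
  set m := Nat.find htors with hmdef
  have hmspec : 0 < m ∧ (m:ℤ) • b₀ = 0 := Nat.find_spec htors
  have hm2 : 2 ≤ m := by
    rcases Nat.lt_or_ge m 2 with h | h
    · interval_cases m
      · exact absurd hmspec.1 (by norm_num)
      · exact absurd (by simpa using hmspec.2) hb₀
    · exact h
  set p := m.minFac with hpdef
  have hp : p.Prime := Nat.minFac_prime (by omega)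
  set b := ((m / p : ℕ) : ℤ) • b₀ with hbdef
  have hdvd : p ∣ m := Nat.minFac_dvd m
  have hmp_pos : 0 < m / p := Nat.div_pos (Nat.minFac_le (by omega)) hp.pos
  have hmp_lt : m / p < m := Nat.div_lt_self (by omega) hp.one_lt
  have hb0 : b ≠ 0 := by
    intro h
    exact (Nat.find_min htors hmp_lt) ⟨hmp_pos, h⟩
  have hpb : (p:ℤ) • b = 0 := by
    rw [hbdef, ← mul_smul, ← Nat.cast_mul, Nat.mul_div_cancel' hdvd]
    exact hmspec.2
  exact ⟨p, hp, b, hb0, hpb, (span_eq b (Submodule.smul_mem _ _ hb₀B) hb0).symm⟩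

end Aux3
section Primary

variable {M : Type*} [AddCommGroup M]

lemma aux_mem_primary {p : ℕ} {x : M} {n : ℕ} (h : (p:ℤ)^n • x = 0) :
    x ∈ primaryComponent M p := by
  rw [primaryComponent, Submodule.mem_torsion'_iff]
  exact ⟨⟨(p:ℤ)^n, ⟨n, rfl⟩⟩, by rwa [Submonoid.smul_def]⟩

lemma aux_primary_torsion {p : ℕ} {x : M} (h : x ∈ primaryComponent M p) :
    ∃ n : ℕ, (p:ℤ)^n • x = 0 := by
  rw [primaryComponent, Submodule.mem_torsion'_iff] at h
  obtain ⟨a, ha⟩ := h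
  obtain ⟨n, hn⟩ := (Submonoid.mem_powers_iff _ _).mp a.2
  rw [Submonoid.smul_def] at ha
  exact ⟨n, by rw [hn]; exact ha⟩

/-- In the primary component, the socle is contained in the `p`-torsion. -/
lemma aux_socle_le_torsionBy {p : ℕ} (hp : p.Prime) :
    moduleSocle ℤ (primaryComponent M p) ≤
      Submodule.torsionBy ℤ (primaryComponent M p) (p:ℤ) := by
  rw [moduleSocle]
  apply sSup_le
  intro S hS z hzS
  obtain ⟨n, hn⟩ := aux_primary_torsion z.2
  have hn' : (p:ℤ)^n • z = 0 := Subtype.ext (by simpa using hn)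
  rw [Submodule.mem_torsionBy_iff]
  exact aux_psmul_eq_zero_of_mem_simple hp hS hzS hn'

end Primary

/-- An abelian group is simple-direct-injective iff for each prime `p`, the `p`-primary
component `T_p(M)` is semisimple or satisfies `Soc(T_p(M)) ⊆ Rad(T_p(M))`. -/
theorem stmt_15 (M : Type*) [AddCommGroup M] :
    SimpleDirectInjective ℤ M ↔
      ∀ p : ℕ, p.Prime →
        IsSemisimpleModule ℤ (primaryComponent M p) ∨
        moduleSocle ℤ (primaryComponent M p) ≤ moduleRad ℤ (primaryComponent M p) := by
  constructor
  · -- forward direction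
    intro hSDI p hp
    rw [or_iff_not_imp_right]
    intro hnot
    obtain ⟨x, hxSoc, hxRad⟩ := SetLike.not_le_iff_exists.mp hnot
    have hpx : (p:ℤ) • x = 0 :=
      (Submodule.mem_torsionBy_iff _ _).mp (aux_socle_le_torsionBy hp hxSoc)
    have hx0 : x ≠ 0 := by
      rintro rfl
      exact hxRad (zero_mem _)
    -- x avoids some coatom K
    have hexK : ∃ K : Submodule ℤ (primaryComponent M p), IsCoatom K ∧ x ∉ K := by
      by_contra hc
      push_neg at hc
      apply hxRad
      rw [moduleRad]
      exact Submodule.mem_sInf.mpr fun S hS => hc S hS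
    obtain ⟨K, hK, hxK⟩ := hexK
    have hatom := aux_isAtom_span hp hx0 hpx
    have hdisj : Disjoint (Submodule.span ℤ {x}) K := by
      rw [disjoint_iff]
      apply hatom.2
      refine lt_of_le_of_ne inf_le_left fun hEq => hxK ?_
      have : Submodule.span ℤ {x} ≤ K := by
        conv_lhs => rw [← hEq]
        exact inf_le_right
      exact this (Submodule.mem_span_singleton_self x)
    have hcodis : Codisjoint (Submodule.span ℤ {x}) K := by
      rw [codisjoint_iff, sup_comm]
      apply hK.2
      refine lt_of_le_of_ne le_sup_left fun hEq => hxK ?_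
      rw [hEq]
      exact Submodule.mem_sup_right (Submodule.mem_span_singleton_self x)
    have hsummandT : IsDirectSummand ℤ (primaryComponent M p) (Submodule.span ℤ {x}) :=
      ⟨K, hdisj, hcodis⟩
    have hxnp := aux_not_psmul_of_summand hx0 hpx hsummandT
    -- pass to M
    set x₀ := (x : M) with hx₀
    have hx₀0 : x₀ ≠ 0 := fun h => hx0 (Subtype.ext h)
    have hpx₀ : (p:ℤ) • x₀ = 0 := by
      have := congrArg (Subtype.val) hpx
      simpa using this
    have hx₀np : ¬ ∃ y : M, x₀ = (p:ℤ) • y := by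
      rintro ⟨y, hy⟩
      have hyT : y ∈ primaryComponent M p := by
        refine aux_mem_primary (n := 2) ?_
        rw [pow_two, mul_smul, ← hy, hpx₀]
      exact hxnp ⟨⟨y, hyT⟩, Subtype.ext hy⟩
    have hBsum : IsDirectSummand ℤ M (Submodule.span ℤ {x₀}) :=
      aux_summand_of_not_psmul hp hpx₀ hx₀np
    -- every element of order p in M generates a direct summand
    have key : ∀ z : M, z ≠ 0 → (p:ℤ) • z = 0 → ¬ ∃ y : M, z = (p:ℤ) • y := by
      intro z hz0 hpz
      have hsum := hSDI _ _ (aux_isSimple_span hp hz0 hpz) (aux_isSimple_span hp hx₀0 hpx₀)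
        ⟨auxEquivSpan hp hz0 hx₀0 hpz hpx₀⟩ hBsum
      exact aux_not_psmul_of_summand hz0 hpz hsum
    -- every element of the primary component is killed by p
    have claim2 : ∀ n : ℕ, ∀ z : M, z ∈ primaryComponent M p → (p:ℤ)^n • z = 0 →
        (p:ℤ) • z = 0 := by
      intro n
      induction n with
      | zero =>
        intro z _ h
        rw [pow_zero, one_smul] at h
        rw [h, smul_zero]
      | succ n ih =>
        intro z hzT h
        have hw : (p:ℤ)^n • ((p:ℤ) • z) = 0 := by
          rw [← mul_smul, ← pow_succ]
          exact h
        have hp2 : (p:ℤ) • ((p:ℤ) • z) = 0 := ih _ (Submodule.smul_mem _ _ hzT) hw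
        by_cases hw0 : (p:ℤ) • z = 0
        · exact hw0
        · exact absurd ⟨z, rfl⟩ (key _ hw0 hp2)
    have hall : ∀ z : (primaryComponent M p), (p:ℤ) • z = 0 := by
      intro z
      obtain ⟨n, hn⟩ := aux_primary_torsion z.2
      exact Subtype.ext (by simpa using claim2 n z.1 z.2 hn)
    refine IsSemisimpleModule.of_sSup_simples_eq_top ?_
    rw [eq_top_iff]
    intro z _
    by_cases hz : z = 0
    · rw [hz]; exact zero_mem _
    · have hmem : Submodule.span ℤ {z} ∈
          {S : Submodule ℤ (primaryComponent M p) | IsSimpleModule ℤ S} :=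
        aux_isSimple_span hp hz (hall z)
      exact le_sSup hmem (Submodule.mem_span_singleton_self z)
  · -- reverse direction
    intro H A B hA hB he hBsum
    obtain ⟨e⟩ := he
    obtain ⟨p, hp, b, hb0, hpb, hBspan⟩ := aux_exists_gen hB
    have hbB : b ∈ B := hBspan ▸ Submodule.mem_span_singleton_self b
    have hbnp : ¬ ∃ y : M, b = (p:ℤ) • y :=
      aux_not_psmul_of_summand hb0 hpb (hBspan ▸ hBsum)
    -- transfer the generator to A
    set bB : B := ⟨b, hbB⟩ with hbBdef
    have hbB0 : bB ≠ 0 := fun h => hb0 (congrArg Subtype.val h)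
    set aA := e.symm bB with haA
    set a := (aA : M) with ha
    have haAmem : a ∈ A := aA.2
    have ha0 : a ≠ 0 := by
      intro h
      apply hbB0
      have h1 : aA = 0 := Subtype.ext h
      rw [← e.apply_symm_apply bB, ← haA, h1, map_zero]
    have hpaA : (p:ℤ) • aA = 0 := by
      have hb' : (p:ℤ) • bB = 0 := Subtype.ext (by simpa using hpb)
      rw [haA, ← map_smul, hb', map_zero]
    have hpa : (p:ℤ) • a = 0 := by
      have := congrArg Subtype.val hpaA
      simpa using this
    have hAatom : IsAtom A := isSimpleModule_iff_isAtom.mp hA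
    have hAspan : A = Submodule.span ℤ {a} := by
      rcases lt_or_eq_of_le (Submodule.span_le.mpr (Set.singleton_subset_iff.mpr haAmem))
        with h | h
      · exfalso
        apply ha0
        have := hAatom.2 _ h
        have hmem : a ∈ (⊥ : Submodule ℤ M) := this ▸ Submodule.mem_span_singleton_self a
        simpa using hmem
      · exact h.symm
    rcases H p hp with hss | hsocrad
    · -- semisimple case
      have htop : sSup {S : Submodule ℤ (primaryComponent M p) | IsSimpleModule ℤ S} = ⊤ :=
        sSup_simples_eq_top_iff_isSemisimpleModule.mpr hss
      have hall : ∀ z : (primaryComponent M p), (p:ℤ) • z = 0 := by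
        intro z
        have hz : z ∈ sSup {S : Submodule ℤ (primaryComponent M p) | IsSimpleModule ℤ S} := by
          rw [htop]; trivial
        have hle := aux_socle_le_torsionBy (M := M) hp
        rw [moduleSocle] at hle
        exact (Submodule.mem_torsionBy_iff _ _).mp (hle hz)
      rw [hAspan]
      apply aux_summand_of_not_psmul hp hpa
      rintro ⟨y, hy⟩
      have hyT : y ∈ primaryComponent M p := by
        refine aux_mem_primary (n := 2) ?_
        rw [pow_two, mul_smul, ← hy, hpa]
      have hpy : (p:ℤ) • y = 0 := by
        have := congrArg Subtype.val (hall ⟨y, hyT⟩)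
        simpa using this
      exact ha0 (by rw [hy, hpy])
    · -- socle ≤ radical case : contradiction
      exfalso
      have hbT : b ∈ primaryComponent M p := aux_mem_primary (n := 1) (by simpa using hpb)
      set bT : (primaryComponent M p) := ⟨b, hbT⟩ with hbTdef
      have hbT0 : bT ≠ 0 := fun h => hb0 (congrArg Subtype.val h)
      have hpbT : (p:ℤ) • bT = 0 := Subtype.ext (by simpa using hpb)
      have hbTnp : ¬ ∃ y : (primaryComponent M p), bT = (p:ℤ) • y := by
        rintro ⟨y, hy⟩
        exact hbnp ⟨y.1, by simpa using congrArg Subtype.val hy⟩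
      obtain ⟨C, hC⟩ := aux_summand_of_not_psmul hp hpbT hbTnp
      have hCcoatom : IsCoatom C := hC.isAtom_iff_isCoatom.mp (aux_isAtom_span hp hbT0 hpbT)
      have hbSoc : bT ∈ moduleSocle ℤ (primaryComponent M p) := by
        rw [moduleSocle]
        have hmem : Submodule.span ℤ {bT} ∈
            {S : Submodule ℤ (primaryComponent M p) | IsSimpleModule ℤ S} :=
          aux_isSimple_span hp hbT0 hpbT
        exact le_sSup hmem (Submodule.mem_span_singleton_self bT)
      have hbRad := hsocrad hbSoc
      rw [moduleRad] at hbRad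
      have hbC : bT ∈ C := Submodule.mem_sInf.mp hbRad C hCcoatom
      exact hbT0 (Submodule.disjoint_def.mp hC.disjoint bT
        (Submodule.mem_span_singleton_self bT) hbC)
end

section
/- Let R be a semilocal ring, M a right R-module, and S' the sum of all simple direct summands of M. Then M is simple-direct-injective if and only if S' is a fully invariant submodule and a direct summand of M. -/
section

open Submodule

variable {R : Type*} [Ring R] {M : Type*} [AddCommGroup M] [Module R M]

variable (R M) in
def simpleSummands : Set (Submodule R M) :=
  {S | IsSimpleModule R S ∧ IsDirectSummand R M S}

theorem isSemisimpleModule_sSup_simpleSummands :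
    IsSemisimpleModule R ↥(sSup (simpleSummands R M)) := by
  rw [sSup_eq_iSup]
  exact isSemisimpleModule_biSup_of_isSemisimpleModule_submodule fun S hS ↦
    have := hS.1; inferInstance

theorem IsSemisimpleModule.exists_disjoint_sup_eq {p A : Submodule R M} [IsSemisimpleModule R p]
    (hA : A ≤ p) : ∃ D, Disjoint A D ∧ A ⊔ D = p := by
  have : ComplementedLattice (Set.Iic p) := p.mapIic.complementedLattice_iff.mp inferInstance
  obtain ⟨D, hD⟩ := exists_isCompl (⟨A, hA⟩ : Set.Iic p)
  exact ⟨D, Set.Iic.isCompl_iff.mp hD⟩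

theorem IsDirectSummand.of_le_of_isSemisimpleModule {p A : Submodule R M}
    (hp : IsDirectSummand R M p) [IsSemisimpleModule R p] (hA : A ≤ p) :
    IsDirectSummand R M A := by
  obtain ⟨C, hC⟩ := hp
  obtain ⟨D, hAD, rfl⟩ := IsSemisimpleModule.exists_disjoint_sup_eq hA
  exact ⟨D ⊔ C, hAD.isCompl_sup_right_of_isCompl_sup_left hC⟩

theorem isDirectSummand_of_disjoint_of_isSemisimpleModule_quotient {N P : Submodule R M}
    [IsSemisimpleModule R (M ⧸ N)] (h : Disjoint P N) : IsDirectSummand R M P := by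
  obtain ⟨K, hK⟩ := exists_isCompl (P.map N.mkQ)
  refine ⟨K.comap N.mkQ, disjoint_iff.mpr ?_, codisjoint_iff.mpr ?_⟩
  · have hN : P ⊓ K.comap N.mkQ ≤ N := by
      calc P ⊓ K.comap N.mkQ ≤ (P.map N.mkQ ⊓ K).comap N.mkQ :=
            le_inf (inf_le_left.trans (le_comap_map _ _)) inf_le_right
        _ = N := by rw [hK.inf_eq_bot, comap_bot, ker_mkQ]
    exact eq_bot_iff.mpr ((le_inf inf_le_left hN).trans h.le_bot)
  · have hN : N ≤ K.comap N.mkQ := (ker_mkQ N).ge.trans (LinearMap.ker_le_comap _)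
    calc P ⊔ K.comap N.mkQ = N ⊔ (P ⊔ K.comap N.mkQ) :=
          (sup_eq_right.mpr (hN.trans le_sup_right)).symm
      _ = (P.map N.mkQ ⊔ K).comap N.mkQ := by
          rw [← comap_map_mkQ, Submodule.map_sup, map_comap_eq_of_surjective N.mkQ_surjective]
      _ = ⊤ := by rw [hK.sup_eq_top, comap_top]

theorem IsSemisimpleModule.of_isTorsionBySet {I : Ideal R} [IsSemisimpleModule R (R ⧸ I)]
    {N : Type*} [AddCommGroup N] [Module R N] (hN : Module.IsTorsionBySet R N I) :
    IsSemisimpleModule R N := by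
  refine isSemisimpleModule_of_isSemisimpleModule_submodule' (p := fun x : N ↦ R ∙ x)
    (fun x ↦ ?_) (eq_top_iff.mpr fun x _ ↦ mem_iSup_of_mem x (mem_span_singleton_self x))
  have hI : I ≤ LinearMap.ker (LinearMap.toSpanSingleton R N x) := fun r hr ↦ @hN x ⟨r, hr⟩
  rw [LinearMap.span_singleton_eq_range, ← range_liftQ I _ hI]
  exact IsSemisimpleModule.range _

theorem disjoint_jacobson_of_isCompl {A N : Submodule R M} (hc : IsCompl A N)
    (hA : Module.jacobson R A = ⊥) : Disjoint A (Module.jacobson R M) := by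
  rw [disjoint_def]
  intro x hxA hxJ
  have hx := Module.map_jacobson_le (projectionOnto A N hc) ⟨x, hxJ, rfl⟩
  rw [hA, projectionOnto_apply_left hc ⟨x, hxA⟩, mem_bot] at hx
  simpa using congrArg Subtype.val hx

namespace SimpleDirectInjective

variable (h : SimpleDirectInjective R M)
include h

theorem map_sSup_simpleSummands_le (f : M →ₗ[R] M) :
    map f (sSup (simpleSummands R M)) ≤ sSup (simpleSummands R M) := by
  rw [map_le_iff_le_comap]
  refine sSup_le fun B hB ↦ map_le_iff_le_comap.mp ?_
  have := hB.1
  have hrange : LinearMap.range (f ∘ₗ B.subtype) = map f B := by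
    rw [LinearMap.range_comp, range_subtype]
  rw [← hrange]
  rcases LinearMap.injective_or_eq_zero (f ∘ₗ B.subtype) with hinj | hzero
  · let e := LinearEquiv.ofInjective _ hinj
    have := IsSimpleModule.congr e.symm
    exact le_sSup ⟨inferInstance, h _ B inferInstance inferInstance ⟨e.symm⟩ hB.2⟩
  · simp [hzero]

theorem disjoint_sSup_simpleSummands_jacobson :
    Disjoint (sSup (simpleSummands R M)) (Module.jacobson R M) := by
  have := isSemisimpleModule_sSup_simpleSummands (R := R) (M := M)
  have : ∀ S : simpleSummands R M, IsSimpleModule R S := fun S ↦ S.2.1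
  set P := sSup (simpleSummands R M) ⊓ Module.jacobson R M
  have : IsSemisimpleModule R P :=
    .of_injective (inclusion inf_le_left) (inclusion_injective inf_le_left)
  rcases IsSemisimpleModule.eq_bot_or_exists_simple_le P with hP | ⟨A, hAP, hA⟩
  · exact disjoint_iff.mpr hP
  obtain ⟨B, hB, ⟨e⟩⟩ := A.linearEquiv_of_le_sSup _ (hAP.trans inf_le_left)
  obtain ⟨N, hN⟩ := h A B hA hB.1 ⟨e⟩ hB.2
  have hA_disj : Disjoint A (Module.jacobson R M) :=
    disjoint_jacobson_of_isCompl hN (IsSimpleModule.jacobson_eq_bot R A)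
  exact ((isSimpleModule_iff_isAtom.mp hA).1 (hA_disj.eq_bot_of_le (hAP.trans inf_le_right))).elim

theorem isDirectSummand_sSup_simpleSummands
    [IsSemisimpleModule R (R ⧸ Ring.jacobson R)] :
    IsDirectSummand R M (sSup (simpleSummands R M)) :=
  have := IsSemisimpleModule.of_isTorsionBySet
    (Module.isTorsionBySet_quotient_ideal_smul M (Ring.jacobson R))
  isDirectSummand_of_disjoint_of_isSemisimpleModule_quotient
    (h.disjoint_sSup_simpleSummands_jacobson.mono_right (Ring.jacobson_smul_top_le R M))

end SimpleDirectInjective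

theorem simpleDirectInjective_of_isDirectSummand_sSup_simpleSummands
    (hfi : ∀ f : M →ₗ[R] M, map f (sSup (simpleSummands R M)) ≤ sSup (simpleSummands R M))
    (hS : IsDirectSummand R M (sSup (simpleSummands R M))) : SimpleDirectInjective R M := by
  intro A B hA hB ⟨e⟩ hBsum
  have hBS : B ≤ sSup (simpleSummands R M) := le_sSup ⟨hB, hBsum⟩
  obtain ⟨N, hN⟩ := hBsum
  let f : M →ₗ[R] M := A.subtype ∘ₗ e.symm.toLinearMap ∘ₗ projectionOnto B N hN
  have hAB : A ≤ map f B := fun a ha ↦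
    ⟨e ⟨a, ha⟩, (e ⟨a, ha⟩).2, by simp [f, projectionOnto_apply_left]⟩
  have := isSemisimpleModule_sSup_simpleSummands (R := R) (M := M)
  exact hS.of_le_of_isSemisimpleModule ((hAB.trans (map_mono hBS)).trans (hfi f))

end

/-- Over a semilocal ring (`R/J(R)` semisimple), a module `M` is simple-direct-injective
iff the sum `S'` of all simple direct summands of `M` is a fully invariant submodule and
a direct summand of `M`. -/
theorem stmt_16 {R : Type*} [Ring R]
    (hsl : IsSemisimpleModule R (R ⧸ (⊥ : Ideal R).jacobson))
    (M : Type*) [AddCommGroup M] [Module R M] :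
    SimpleDirectInjective R M ↔
      (∀ f : M →ₗ[R] M,
          Submodule.map f (sSup {S : Submodule R M |
            IsSimpleModule R S ∧ IsDirectSummand R M S}) ≤
            sSup {S : Submodule R M | IsSimpleModule R S ∧ IsDirectSummand R M S}) ∧
      IsDirectSummand R M
        (sSup {S : Submodule R M | IsSimpleModule R S ∧ IsDirectSummand R M S}) := by
  rw [Ideal.jacobson_bot] at hsl
  exact ⟨fun h ↦ ⟨h.map_sSup_simpleSummands_le, h.isDirectSummand_sSup_simpleSummands⟩,
    fun ⟨hfi, hS⟩ ↦ simpleDirectInjective_of_isDirectSummand_sSup_simpleSummands hfi hS⟩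
end

section
/- For a ring R, every projective simple right R-module is injective if and only if every nonsingular right R-module is simple-direct-injective. -/
universe u v

namespace Stmt17Aux

variable {R : Type u} [Ring R]

/-- Essential left ideal. -/
def Ess (I : Ideal R) : Prop := ∀ N : Ideal R, N ≠ ⊥ → I ⊓ N ≠ ⊥

lemma ess_mono {I I' : Ideal R} (h : Ess I) (hle : I ≤ I') : Ess I' := by
  intro N hN hbot
  exact h N hN (le_bot_iff.1 (hbot ▸ inf_le_inf_right N hle))

variable {M : Type v} [AddCommGroup M] [Module R M]

lemma ess_torsionOf_smul (m : M) (r : R)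
    (h : Ess (Ideal.torsionOf R M m)) : Ess (Ideal.torsionOf R M (r • m)) := by
  intro N hN
  by_cases hN' : Submodule.map (LinearMap.toSpanSingleton R R r) N = ⊥
  · rw [Submodule.ne_bot_iff] at hN ⊢
    obtain ⟨x, hxN, hx0⟩ := hN
    refine ⟨x, Submodule.mem_inf.2 ⟨?_, hxN⟩, hx0⟩
    have hxr : x • r = 0 := by
      have : LinearMap.toSpanSingleton R R r x ∈
          Submodule.map (LinearMap.toSpanSingleton R R r) N := Submodule.mem_map_of_mem hxN
      rw [hN', Submodule.mem_bot] at this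
      exact this
    rw [Ideal.mem_torsionOf_iff, smul_smul, ← smul_eq_mul, hxr, zero_smul]
  · obtain ⟨y, hy, hy0⟩ := (Submodule.ne_bot_iff _).1 (h _ hN')
    obtain ⟨hy1, hy2⟩ := Submodule.mem_inf.1 hy
    obtain ⟨x, hxN, hxy⟩ := hy2
    refine (Submodule.ne_bot_iff _).2 ⟨x, Submodule.mem_inf.2 ⟨?_, hxN⟩, ?_⟩
    · rw [Ideal.mem_torsionOf_iff, smul_smul]
      have hym : y • m = 0 := (Ideal.mem_torsionOf_iff m y).1 hy1
      rw [show x * r = y from by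
        simpa [LinearMap.toSpanSingleton_apply, smul_eq_mul] using hxy]
      exact hym
    · rintro rfl
      exact hy0 (by simpa [LinearMap.toSpanSingleton_apply] using hxy.symm)

/-- A module with an essential submodule all of whose elements are "nonsingular"
is nonsingular. -/
lemma nonsing_of_essential (T : Submodule R M)
    (hT : ∀ D : Submodule R M, D ≠ ⊥ → T ⊓ D ≠ ⊥)
    (hns : ∀ t ∈ T, Ess (Ideal.torsionOf R M t) → t = 0) :
    ∀ m : M, Ess (Ideal.torsionOf R M m) → m = 0 := by
  intro m hm
  by_contra hm0
  have hsp : Submodule.span R {m} ≠ ⊥ := by rwa [Ne, Submodule.span_singleton_eq_bot]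
  obtain ⟨t, ht, ht0⟩ := (Submodule.ne_bot_iff _).1 (hT _ hsp)
  obtain ⟨htT, hts⟩ := Submodule.mem_inf.1 ht
  obtain ⟨r, rfl⟩ := Submodule.mem_span_singleton.1 hts
  exact ht0 (hns _ htT (ess_torsionOf_smul m r hm))

/-- An injective submodule is a direct summand. -/
lemma summand_of_injective (A : Submodule R M) (h : Module.Injective R ↥A) :
    ∃ B : Submodule R M, IsCompl A B := by
  obtain ⟨h', hh⟩ := h.out A.subtype (Submodule.injective_subtype A) LinearMap.id
  refine ⟨LinearMap.ker h', ⟨Submodule.disjoint_def.2 fun x hxA hxk => ?_,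
    codisjoint_iff.2 (eq_top_iff.2 fun m _ => ?_)⟩⟩
  · have : h' (A.subtype ⟨x, hxA⟩) = ⟨x, hxA⟩ := hh ⟨x, hxA⟩
    have h0 : (⟨x, hxA⟩ : ↥A) = 0 := by
      rw [← this]; exact hxk
    simpa using congrArg (Subtype.val) h0
  · have hmem : m - ↑(h' m) ∈ LinearMap.ker h' := by
      rw [LinearMap.mem_ker, map_sub]
      have : h' (A.subtype (h' m)) = h' m := hh (h' m)
      rw [show ((h' m : M)) = A.subtype (h' m) from rfl, this, sub_self]
    have : m = ↑(h' m) + (m - ↑(h' m)) := by abel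
    rw [this]
    exact Submodule.add_mem_sup (h' m).2 hmem

lemma forward (hLHS : ∀ (S : Type u) [AddCommGroup S] [Module R S],
      IsSimpleModule R S → Module.Projective R S → Module.Injective R S)
    (M : Type u) [AddCommGroup M] [Module R M]
    (hns : ∀ m : M, (∀ N : Ideal R, N ≠ ⊥ → Ideal.torsionOf R M m ⊓ N ≠ ⊥) → m = 0)
    (A : Submodule R M) (hA : IsSimpleModule R A) :
    ∃ B : Submodule R M, IsCompl A B := by
  haveI := hA
  haveI : Nontrivial ↥A := IsSimpleModule.nontrivial R ↥A
  obtain ⟨a, ha0⟩ := exists_ne (0 : ↥A)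
  have ha0' : (a : M) ≠ 0 := fun h => ha0 (Subtype.ext h)
  set I : Ideal R := Ideal.torsionOf R M ↑a with hI
  have hle : Submodule.span R {(a : M)} ≤ A :=
    Submodule.span_le.2 (Set.singleton_subset_iff.2 a.2)
  have heq : Submodule.span R {(a : M)} = A := by
    rcases hle.lt_or_eq with hlt | heq
    · exact absurd (Submodule.span_singleton_eq_bot.mp
        ((isSimpleModule_iff_isAtom.mp hA).2 _ hlt)) ha0'
    · exact heq
  have e1 : (R ⧸ I) ≃ₗ[R] ↥A :=
    (Ideal.quotTorsionOfEquivSpanSingleton R M ↑a).trans (LinearEquiv.ofEq _ _ heq)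
  haveI hsimp : IsSimpleModule R (R ⧸ I) := IsSimpleModule.congr e1
  have hcoatom : IsCoatom I := isSimpleModule_iff_isCoatom.mp hsimp
  have hne : ¬ (∀ N : Ideal R, N ≠ ⊥ → I ⊓ N ≠ ⊥) := fun h => ha0' (hns _ h)
  push_neg at hne
  obtain ⟨J, hJ0, hIJ⟩ := hne
  have hsup : I ⊔ J = ⊤ := by
    refine hcoatom.2 _ (left_lt_sup.2 fun hJI => hJ0 ?_)
    rw [← hIJ, inf_eq_right.mpr hJI]
  have hcompl : IsCompl I J := ⟨disjoint_iff.2 hIJ, codisjoint_iff.2 hsup⟩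
  have hprojJ : Module.Projective R ↥J :=
    Module.Projective.of_split J.subtype (Submodule.linearProjOfIsCompl J I hcompl.symm)
      (Submodule.linearProjOfIsCompl_comp_subtype hcompl.symm)
  have e2 : (R ⧸ I) ≃ₗ[R] ↥J := I.quotientEquivOfIsCompl J hcompl
  have hprojA : Module.Projective R ↥A := Module.Projective.of_equiv (e2.symm.trans e1)
  exact summand_of_injective A (hLHS ↥A hA hprojA)

lemma simple_projective_nonsing (S : Type v) [AddCommGroup S] [Module R S]
    (hS : IsSimpleModule R S) (hproj : Module.Projective R S) :
    ∀ s : S, Ess (Ideal.torsionOf R S s) → s = 0 := by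
  haveI := hS
  haveI := hproj
  intro s hs
  by_contra hs0
  have hsur : Function.Surjective (LinearMap.toSpanSingleton R S s) :=
    IsSimpleModule.toSpanSingleton_surjective R hs0
  obtain ⟨σ, hσ⟩ := Module.projective_lifting_property
    (LinearMap.toSpanSingleton R S s) LinearMap.id hsur
  have hid : ∀ t : S, LinearMap.toSpanSingleton R S s (σ t) = t := fun t =>
    LinearMap.ext_iff.1 hσ t
  have hrange0 : LinearMap.range σ ≠ ⊥ := by
    intro hb
    have h1 : σ s ∈ LinearMap.range σ := ⟨s, rfl⟩
    rw [hb, Submodule.mem_bot] at h1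
    exact hs0 (by rw [← hid s, h1, map_zero])
  have hd : Ideal.torsionOf R S s ⊓ LinearMap.range σ = ⊥ := by
    apply (Submodule.eq_bot_iff _).2
    intro x hx
    obtain ⟨hx1, hx2⟩ := Submodule.mem_inf.1 hx
    obtain ⟨t, rfl⟩ := hx2
    have ht : t = 0 := by
      rw [← hid t]
      rw [Ideal.mem_torsionOf_iff] at hx1
      exact hx1
    rw [ht, map_zero]
  exact hs _ hrange0 hd

lemma backward
    (hRHS : ∀ (M : Type u) [AddCommGroup M] [Module R M],
        (∀ m : M, (∀ N : Ideal R, N ≠ ⊥ → Ideal.torsionOf R M m ⊓ N ≠ ⊥) → m = 0) →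
        SimpleDirectInjective R M)
    (S : Type u) [AddCommGroup S] [Module R S]
    (hS : IsSimpleModule R S) (hproj : Module.Projective R S) :
    Module.Injective R S := by
  haveI := hS
  haveI := hproj
  have nsS : ∀ s : S, Ess (Ideal.torsionOf R S s) → s = 0 :=
    simple_projective_nonsing S hS hproj
  apply Module.Baer.injective
  intro I f
  rcases eq_bot_or_eq_top (LinearMap.range f) with hr | hr
  · refine ⟨0, fun x hx => ?_⟩
    have h1 : f ⟨x, hx⟩ ∈ LinearMap.range f := ⟨_, rfl⟩
    rw [hr, Submodule.mem_bot] at h1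
    simp [h1]
  · have hfs : Function.Surjective f := LinearMap.range_eq_top.1 hr
    obtain ⟨σ, hσ⟩ := Module.projective_lifting_property f LinearMap.id hfs
    have hσ' : ∀ t : S, f (σ t) = t := fun t => LinearMap.ext_iff.1 hσ t
    set e : S →ₗ[R] R := I.subtype.comp σ with he
    have hei : Function.Injective e := by
      intro x y hxy
      have hxy' : σ x = σ y := Subtype.ext hxy
      rw [← hσ' x, ← hσ' y, hxy']
    set T' : Ideal R := LinearMap.range e with hT'
    set K : Ideal R := Submodule.map I.subtype (LinearMap.ker f) with hK
    have hKT : K ⊓ T' = ⊥ := by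
      apply (Submodule.eq_bot_iff _).2
      intro x hx
      obtain ⟨hx1, hx2⟩ := Submodule.mem_inf.1 hx
      obtain ⟨k, hk, hkx⟩ := hx1
      obtain ⟨t, rfl⟩ := hx2
      have hkt : k = σ t := Subtype.ext hkx
      have ht : t = 0 := by
        rw [← hσ' t, ← hkt]
        exact hk
      rw [ht, map_zero]
    -- Zorn's lemma: a complement of T' containing K
    obtain ⟨C, hKC, hCmax⟩ := zorn_le_nonempty₀
      {X : Ideal R | K ≤ X ∧ X ⊓ T' = ⊥}
      (fun c hcs hchain y hy => by
        refine ⟨sSup c, ⟨(hcs hy).1.trans (le_sSup hy), ?_⟩, fun z hz => le_sSup hz⟩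
        apply (Submodule.eq_bot_iff _).2
        intro x hx
        obtain ⟨hx1, hx2⟩ := Submodule.mem_inf.1 hx
        obtain ⟨p, hpc, hxp⟩ := (Submodule.mem_sSup_of_directed ⟨y, hy⟩ hchain.directedOn).1 hx1
        have : x ∈ p ⊓ T' := Submodule.mem_inf.2 ⟨hxp, hx2⟩
        rw [(hcs hpc).2, Submodule.mem_bot] at this
        exact this)
      K ⟨le_rfl, hKT⟩
    have hCT : C ⊓ T' = ⊥ := hCmax.1.2
    set e2 : S →ₗ[R] R ⧸ C := C.mkQ.comp e with he2
    have he2i : Function.Injective e2 := by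
      intro x y hxy
      apply hei
      have hmem : e x - e y ∈ C := by
        rw [← Submodule.Quotient.eq]
        exact hxy
      have hmem2 : e x - e y ∈ C ⊓ T' :=
        Submodule.mem_inf.2 ⟨hmem, Submodule.sub_mem _ ⟨x, rfl⟩ ⟨y, rfl⟩⟩
      rw [hCT, Submodule.mem_bot, sub_eq_zero] at hmem2
      exact hmem2
    set Tb : Submodule R (R ⧸ C) := LinearMap.range e2 with hTb
    -- Tb is essential in R ⧸ C
    have hTbess : ∀ D : Submodule R (R ⧸ C), D ≠ ⊥ → Tb ⊓ D ≠ ⊥ := by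
      intro D hD hcon
      obtain ⟨d, hdD, hd0⟩ := (Submodule.ne_bot_iff D).1 hD
      obtain ⟨r, rfl⟩ := C.mkQ_surjective d
      have hrC : r ∉ C := fun h => hd0 (by rwa [Submodule.mkQ_apply, Submodule.Quotient.mk_eq_zero])
      have hCD' : C ≤ Submodule.comap C.mkQ D := by
        intro x hx
        have : C.mkQ x = 0 := by rwa [Submodule.mkQ_apply, Submodule.Quotient.mk_eq_zero]
        show C.mkQ x ∈ D
        rw [this]; exact D.zero_mem
      have hne : ¬ (Submodule.comap C.mkQ D ≤ C) := fun h => hrC (h hdD)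
      have hD'T : Submodule.comap C.mkQ D ⊓ T' ≠ ⊥ := by
        intro hbot
        exact hne (hCmax.2 ⟨hKC.trans hCD', hbot⟩ hCD')
      obtain ⟨t, ht, ht0⟩ := (Submodule.ne_bot_iff _).1 hD'T
      obtain ⟨htD, htT⟩ := Submodule.mem_inf.1 ht
      have htC : t ∉ C := fun h => ht0 (by
        have : t ∈ C ⊓ T' := Submodule.mem_inf.2 ⟨h, htT⟩
        rwa [hCT, Submodule.mem_bot] at this)
      have hmem : C.mkQ t ∈ Tb ⊓ D := by
        refine Submodule.mem_inf.2 ⟨?_, htD⟩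
        obtain ⟨u, hu⟩ := htT
        exact ⟨u, by rw [he2, LinearMap.comp_apply, hu]⟩
      rw [hcon, Submodule.mem_bot, Submodule.mkQ_apply, Submodule.Quotient.mk_eq_zero] at hmem
      exact htC hmem
    -- all elements of Tb are nonsingular
    have nsTb : ∀ t ∈ Tb, Ess (Ideal.torsionOf R (R ⧸ C) t) → t = 0 := by
      rintro _ ⟨u, rfl⟩ ht
      have hann : Ideal.torsionOf R S u = Ideal.torsionOf R (R ⧸ C) (e2 u) := by
        ext x
        rw [Ideal.mem_torsionOf_iff, Ideal.mem_torsionOf_iff, ← map_smul]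
        constructor
        · intro h; rw [h, map_zero]
        · intro h
          have := he2i (h.trans (map_zero e2).symm)
          exact this
      have := nsS u (by rw [hann]; exact ht)
      rw [this, map_zero]
    have nsQ : ∀ x : R ⧸ C, Ess (Ideal.torsionOf R (R ⧸ C) x) → x = 0 :=
      nonsing_of_essential Tb hTbess nsTb
    -- the product module is nonsingular
    have nsM : ∀ m : (R ⧸ C) × S,
        (∀ N : Ideal R, N ≠ ⊥ → Ideal.torsionOf R ((R ⧸ C) × S) m ⊓ N ≠ ⊥) → m = 0 := by
      rintro ⟨x, s⟩ hm
      have hle1 : Ideal.torsionOf R ((R ⧸ C) × S) (x, s) ≤ Ideal.torsionOf R (R ⧸ C) x := by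
        intro y hy
        rw [Ideal.mem_torsionOf_iff] at hy ⊢
        exact congrArg Prod.fst hy
      have hle2 : Ideal.torsionOf R ((R ⧸ C) × S) (x, s) ≤ Ideal.torsionOf R S s := by
        intro y hy
        rw [Ideal.mem_torsionOf_iff] at hy ⊢
        exact congrArg Prod.snd hy
      have h1 : x = 0 := nsQ x (ess_mono hm hle1)
      have h2 : s = 0 := nsS s (ess_mono hm hle2)
      rw [h1, h2]
      rfl
    -- apply simple-direct-injectivity
    set uA : S →ₗ[R] (R ⧸ C) × S := (LinearMap.inl R (R ⧸ C) S).comp e2 with huA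
    have huAi : Function.Injective uA := by
      intro x y h
      exact he2i (congrArg Prod.fst h)
    set A : Submodule R ((R ⧸ C) × S) := LinearMap.range uA with hA
    set B : Submodule R ((R ⧸ C) × S) := LinearMap.range (LinearMap.inr R (R ⧸ C) S) with hB
    have eA : S ≃ₗ[R] ↥A := LinearEquiv.ofInjective uA huAi
    have eB : S ≃ₗ[R] ↥B := LinearEquiv.ofInjective _ LinearMap.inr_injective
    haveI hAs : IsSimpleModule R ↥A := IsSimpleModule.congr eA.symm
    haveI hBs : IsSimpleModule R ↥B := IsSimpleModule.congr eB.symm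
    have hBsum : IsDirectSummand R ((R ⧸ C) × S) B :=
      ⟨LinearMap.range (LinearMap.inl R (R ⧸ C) S), LinearMap.isCompl_range_inl_inr.symm⟩
    obtain ⟨A', hA'⟩ := hRHS ((R ⧸ C) × S) nsM A B hAs hBs ⟨eA.symm.trans eB⟩ hBsum
    set π := Submodule.linearProjOfIsCompl A A' hA' with hπ
    set p : (R ⧸ C) →ₗ[R] R ⧸ C :=
      (LinearMap.fst R (R ⧸ C) S).comp (A.subtype.comp (π.comp (LinearMap.inl R (R ⧸ C) S)))
      with hp
    have hp1 : ∀ x : R ⧸ C, p x ∈ Tb := by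
      intro x
      obtain ⟨sx, hsx⟩ := (π ((LinearMap.inl R (R ⧸ C) S) x)).2
      refine ⟨sx, ?_⟩
      rw [hp]
      simp only [LinearMap.comp_apply, LinearMap.fst_apply]
      exact congrArg Prod.fst hsx
    have hp2 : ∀ t ∈ Tb, p t = t := by
      rintro _ ⟨u, rfl⟩
      have h1 : (LinearMap.inl R (R ⧸ C) S) (e2 u) = uA u := rfl
      have hmem : uA u ∈ A := ⟨u, rfl⟩
      have h2 : π (uA u) = ⟨uA u, hmem⟩ :=
        Submodule.linearProjOfIsCompl_apply_left hA' ⟨uA u, hmem⟩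
      rw [hp]
      simp only [LinearMap.comp_apply, LinearMap.fst_apply]
      rw [h1, h2]
      rfl
    have hTbtop : Tb = ⊤ := by
      rw [eq_top_iff]
      intro x _
      by_contra hx
      have hy0 : x - p x ≠ 0 := fun h => hx (by
        rw [sub_eq_zero] at h
        rw [h]; exact hp1 x)
      have hspan : Submodule.span R {x - p x} ≠ ⊥ := by
        rwa [Ne, Submodule.span_singleton_eq_bot]
      obtain ⟨t, ht, ht0⟩ := (Submodule.ne_bot_iff _).1 (hTbess _ hspan)
      obtain ⟨htT, hts⟩ := Submodule.mem_inf.1 ht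
      obtain ⟨r, hr⟩ := Submodule.mem_span_singleton.1 hts
      have hpt : p t = 0 := by
        rw [← hr, map_smul, map_sub, hp2 (p x) (hp1 x), sub_self, smul_zero]
      exact ht0 (by rw [← hp2 t htT, hpt])
    -- hence T' ⊔ C = ⊤ and T' is a complement of C
    have hsupTC : T' ⊔ C = ⊤ := by
      have hmap : Submodule.map C.mkQ T' = ⊤ := by
        rw [← hTbtop, hTb, he2, LinearMap.range_comp]
      rw [Submodule.map_mkQ_eq_top] at hmap
      rw [sup_comm]
      exact hmap
    have hTC : IsCompl T' C :=
      ⟨disjoint_iff.2 (by rw [inf_comm]; exact hCT), codisjoint_iff.2 hsupTC⟩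
    set proj := Submodule.linearProjOfIsCompl T' C hTC with hproj'
    have hT'I : T' ≤ I := by
      rintro _ ⟨u, rfl⟩
      exact (σ u).2
    refine ⟨f.comp ((Submodule.inclusion hT'I).comp proj), ?_⟩
    intro x hx
    have hcC : x - ↑(proj x) ∈ C := by
      have h0 : proj (x - ↑(proj x)) = 0 := by
        rw [map_sub]
        have : proj ((proj x : R)) = proj x :=
          Submodule.linearProjOfIsCompl_apply_left hTC (proj x)
        rw [this, sub_self]
      exact (Submodule.linearProjOfIsCompl_apply_eq_zero_iff hTC).1 h0
    have hcI : x - ↑(proj x) ∈ I := sub_mem hx (hT'I (proj x).2)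
    have hfc : f ⟨x - ↑(proj x), hcI⟩ = 0 := by
      set s' := f ⟨x - ↑(proj x), hcI⟩ with hs'
      have h2 : (⟨x - ↑(proj x), hcI⟩ - σ s' : ↥I) ∈ LinearMap.ker f := by
        rw [LinearMap.mem_ker, map_sub, hσ' s', ← hs', sub_self]
      have h3 : (x - ↑(proj x)) - e s' ∈ K := ⟨_, h2, rfl⟩
      have h4 : e s' ∈ C := by
        have := sub_mem hcC (hKC h3)
        simpa using this
      have h5 : e s' ∈ C ⊓ T' := Submodule.mem_inf.2 ⟨h4, ⟨s', rfl⟩⟩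
      rw [hCT, Submodule.mem_bot] at h5
      have : s' = 0 := hei (h5.trans (map_zero e).symm)
      exact this
    have hxsplit : (⟨x, hx⟩ : ↥I) =
        (Submodule.inclusion hT'I) (proj x) + ⟨x - ↑(proj x), hcI⟩ := by
      apply Subtype.ext
      show x = ↑(proj x) + (x - ↑(proj x))
      abel
    rw [LinearMap.comp_apply, LinearMap.comp_apply, hxsplit, map_add, hfc, add_zero]

end Stmt17Aux

/-- Every projective simple right `R`-module is injective iff every nonsingular right
`R`-module is simple-direct-injective.  Nonsingularity of `M` is expressed elementwise:
no nonzero element of `M` has an essential annihilator. -/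
theorem stmt_17 (R : Type u) [Ring R] :
    (∀ (S : Type u) [AddCommGroup S] [Module R S],
        IsSimpleModule R S → Module.Projective R S → Module.Injective R S) ↔
      (∀ (M : Type u) [AddCommGroup M] [Module R M],
        (∀ m : M, (∀ N : Ideal R, N ≠ ⊥ → Ideal.torsionOf R M m ⊓ N ≠ ⊥) → m = 0) →
        SimpleDirectInjective R M) := by
  constructor
  · intro hLHS M _ _ hns A B hA hB _ _
    exact Stmt17Aux.forward hLHS M hns A hA
  · intro hRHS S _ _ hS hproj
    exact Stmt17Aux.backward hRHS S hS hproj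
end

section
/- If R is a ring such that every simple-direct-injective right R-module is simple-direct-projective, then R is semilocal and right semiartinian (hence left perfect). -/
section Aux

universe u

variable {R : Type u} [Ring R]

lemma simple_ne_bot' {M : Type*} [AddCommGroup M] [Module R M]
    {A : Submodule R M} (hA : IsSimpleModule R A) : A ≠ ⊥ :=
  (isSimpleModule_iff_isAtom.mp hA).1

lemma eq_of_le_simple {M : Type*} [AddCommGroup M] [Module R M]
    {A B : Submodule R M} (hB : IsSimpleModule R B) (hA : A ≠ ⊥)
    (hle : A ≤ B) : A = B := by
  by_contra hne
  exact hA ((isSimpleModule_iff_isAtom.mp hB).2 A (lt_of_le_of_ne hle hne))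

lemma map_simple {M : Type*} [AddCommGroup M] [Module R M]
    {N : Type*} [AddCommGroup N] [Module R N] (f : M →ₗ[R] N)
    {A : Submodule R M} (hA : IsSimpleModule R A) (hne : A.map f ≠ ⊥) :
    IsSimpleModule R (A.map f) := by
  haveI := hA
  set g : A →ₗ[R] N := f.comp A.subtype with hg
  have hrange : LinearMap.range g = A.map f := by
    rw [hg, LinearMap.range_comp, Submodule.range_subtype]
  have hker : LinearMap.ker g = ⊥ := by
    rcases eq_bot_or_eq_top (LinearMap.ker g) with h | h
    · exact h
    · exfalso
      apply hne
      rw [← hrange, LinearMap.range_eq_bot.mpr (LinearMap.ker_eq_top.mp h)]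
  have einj : Function.Injective g := LinearMap.ker_eq_bot.mp hker
  have e : A ≃ₗ[R] LinearMap.range g := LinearEquiv.ofInjective g einj
  rw [← hrange]
  exact IsSimpleModule.congr e.symm

lemma summand_of_retraction {M : Type*} [AddCommGroup M] [Module R M]
    {A : Submodule R M} (ρ : M →ₗ[R] A)
    (hρ : ∀ x : A, ρ x = x) : IsDirectSummand R M A :=
  ⟨LinearMap.ker ρ, LinearMap.isCompl_of_proj hρ⟩

lemma jac_left_inv {a : R} (ha : a ∈ (⊥ : Ideal R).jacobson) (y : R) :
    ∃ z, z * (y * a + 1) = 1 := by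
  obtain ⟨z, hz⟩ := Ideal.mem_jacobson_iff.mp ha y
  rw [Submodule.mem_bot, sub_eq_zero] at hz
  exact ⟨z, by rw [mul_add, mul_one, ← mul_assoc]; exact hz⟩

lemma jac_mem {a : R} (H : ∀ y, ∃ z, z * (y * a + 1) = 1) : a ∈ (⊥ : Ideal R).jacobson := by
  rw [Ideal.mem_jacobson_iff]
  intro y
  obtain ⟨z, hz⟩ := H y
  refine ⟨z, ?_⟩
  rw [Submodule.mem_bot, sub_eq_zero, mul_assoc]
  rw [mul_add, mul_one] at hz
  exact hz

lemma swap_inv {a b c : R} (h : c * (1 + b * a) = 1) :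
    (1 - a * c * b) * (1 + a * b) = 1 := by
  have key : (1 - a * c * b) * (1 + a * b) = 1 + a * b - a * (c * (1 + b * a)) * b := by
    noncomm_ring
  rw [key, h]; noncomm_ring

lemma jac_mul_right {a : R} (ha : a ∈ (⊥ : Ideal R).jacobson) (r : R) :
    a * r ∈ (⊥ : Ideal R).jacobson := by
  apply jac_mem
  intro y
  obtain ⟨c, hc⟩ := jac_left_inv ha (r * y)
  have hc' : c * (1 + (r * (y * a))) = 1 := by
    rw [add_comm] at hc; rw [← mul_assoc r y a]; exact hc
  have h2 := swap_inv (a := y * a) (b := r) (c := c) hc'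
  refine ⟨1 - (y * a) * c * r, ?_⟩
  rw [show y * (a * r) + 1 = 1 + y * a * r by noncomm_ring]
  exact h2

lemma jac_nil {a : R} (H : ∀ x y : R, (x * a) * (y * a) ∈ (⊥ : Ideal R).jacobson) :
    a ∈ (⊥ : Ideal R).jacobson := by
  apply jac_mem
  intro y
  have hbb : (y * a) * (y * a) ∈ (⊥ : Ideal R).jacobson := H y y
  obtain ⟨z, hz⟩ := jac_left_inv hbb (-1)
  refine ⟨z * (1 - y * a), ?_⟩
  have h1 : (-1 : R) * (y * a * (y * a)) + 1 = 1 - (y * a) * (y * a) := by noncomm_ring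
  rw [h1] at hz
  calc z * (1 - y * a) * (y * a + 1) = z * (1 - (y * a) * (y * a)) := by noncomm_ring
    _ = 1 := hz

lemma simple_summand_quot (I : Ideal R)
    (hright : ∀ a ∈ I, ∀ r : R, a * r ∈ I)
    (hnil : ∀ a : R, (∀ x y : R, (x * a) * (y * a) ∈ I) → a ∈ I)
    (A : Submodule R (R ⧸ I)) (hA : IsSimpleModule R A) :
    IsDirectSummand R (R ⧸ I) A := by
  haveI := hA
  have hsmul : ∀ (r s : R), I.mkQ (r * s) = r • I.mkQ s := by
    intro r s; rw [← smul_eq_mul, map_smul]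
  by_cases hcase : ∃ x a : R, I.mkQ x ∈ A ∧ I.mkQ a ∈ A ∧ I.mkQ (x * a) ≠ 0
  · obtain ⟨x₀, a, hx₀, ha, hne⟩ := hcase
    set φ : R →ₗ[R] (R ⧸ I) := I.mkQ.comp (LinearMap.toSpanSingleton R R a) with hφ
    have hφ_apply : ∀ r : R, φ r = I.mkQ (r * a) := fun r => rfl
    have hJker : I ≤ LinearMap.ker φ := by
      intro j hj
      rw [LinearMap.mem_ker, hφ_apply, Submodule.mkQ_apply, Submodule.Quotient.mk_eq_zero]
      exact hright j hj a
    set ψ : (R ⧸ I) →ₗ[R] (R ⧸ I) := I.liftQ φ hJker with hψ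
    have hψ_apply : ∀ r : R, ψ (I.mkQ r) = I.mkQ (r * a) := fun r => rfl
    have hrange : ∀ m : R ⧸ I, ψ m ∈ A := by
      intro m
      obtain ⟨r, rfl⟩ := I.mkQ_surjective m
      rw [hψ_apply, hsmul]
      exact A.smul_mem r ha
    set ψ' : (R ⧸ I) →ₗ[R] A := LinearMap.codRestrict A ψ hrange with hψ'
    set ψA : A →ₗ[R] A := ψ'.comp A.subtype with hψA
    have hψA0 : ψA ≠ 0 := by
      intro h0
      apply hne
      have h1 : (ψA ⟨I.mkQ x₀, hx₀⟩ : R ⧸ I) = ψ (I.mkQ x₀) := rfl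
      rw [h0] at h1
      rw [← hψ_apply x₀, ← h1]
      rfl
    have hbij := (LinearMap.bijective_or_eq_zero ψA).resolve_right hψA0
    set eA := LinearEquiv.ofBijective ψA hbij with heA
    refine summand_of_retraction ((eA.symm : A →ₗ[R] A).comp ψ') ?_
    intro x
    show eA.symm (ψ' (A.subtype x)) = x
    rw [show ψ' (A.subtype x) = eA x from rfl]
    exact eA.symm_apply_apply x
  · push_neg at hcase
    exfalso
    apply simple_ne_bot' hA
    have hIJ : A.comap I.mkQ ≤ I := by
      intro a haI
      rw [Submodule.mem_comap] at haI
      apply hnil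
      intro x y
      have hxA : I.mkQ (x * a) ∈ A := by rw [hsmul]; exact A.smul_mem x haI
      have hyA : I.mkQ (y * a) ∈ A := by rw [hsmul]; exact A.smul_mem y haI
      have h2 := hcase (x * a) (y * a) hxA hyA
      rwa [Submodule.mkQ_apply, Submodule.Quotient.mk_eq_zero] at h2
    have hA_eq : A = Submodule.map I.mkQ (A.comap I.mkQ) := by
      rw [Submodule.map_comap_eq, Submodule.range_mkQ, top_inf_eq]
    rw [hA_eq, eq_bot_iff]
    rintro x ⟨a, haI, rfl⟩
    rw [Submodule.mem_bot, Submodule.mkQ_apply, Submodule.Quotient.mk_eq_zero]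
    exact hIJ haI

lemma simple_summand_quot_jacobson
    (A : Submodule R (R ⧸ (⊥ : Ideal R).jacobson)) (hA : IsSimpleModule R A) :
    IsDirectSummand R (R ⧸ (⊥ : Ideal R).jacobson) A :=
  simple_summand_quot _ (fun a ha r => jac_mul_right ha r) (fun _ H => jac_nil H) A hA

lemma exists_coatom_ge {N : Type*} [AddCommGroup N] [Module R N] {x : N}
    (hx : Submodule.span R {x} = ⊤) (V : Submodule R N) (hxV : x ∉ V) :
    ∃ K : Submodule R N, IsCoatom K ∧ V ≤ K := by
  have ih : ∀ c ⊆ {P : Submodule R N | x ∉ P}, IsChain (· ≤ ·) c → ∀ y ∈ c,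
      ∃ ub ∈ {P : Submodule R N | x ∉ P}, ∀ z ∈ c, z ≤ ub := by
    intro c hcs hchain y hy
    refine ⟨sSup c, ?_, fun z hz => le_sSup hz⟩
    intro hxc
    obtain ⟨p, hpc, hxp⟩ := (Submodule.mem_sSup_of_directed ⟨y, hy⟩ hchain.directedOn).mp hxc
    exact hcs hpc hxp
  obtain ⟨K, hVK, hKmax⟩ := zorn_le_nonempty₀ {P : Submodule R N | x ∉ P} ih V hxV
  refine ⟨K, ⟨?_, ?_⟩, hVK⟩
  · intro htop
    exact hKmax.1 (htop ▸ Submodule.mem_top)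
  · intro Q hQ
    by_cases hxQ : x ∈ Q
    · exact top_unique (hx ▸ Submodule.span_le.mpr (Set.singleton_subset_iff.mpr hxQ))
    · exact absurd (hKmax.2 hxQ hQ.le) (not_le_of_gt hQ)

/-- The key construction: if every SDI module is SDP, `K` is a coatom of `N` such that every
simple submodule of `N` is contained in `K` and is a direct summand, we get a contradiction. -/
lemma main_contra
    (h : ∀ (M : Type u) [AddCommGroup M] [Module R M],
      SimpleDirectInjective R M → SimpleDirectProjective R M)
    {N : Type u} [AddCommGroup N] [Module R N]
    (K : Submodule R N) (hK : IsCoatom K)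
    (hsoc : ∀ C : Submodule R N, IsSimpleModule R C → C ≤ K)
    (hsum : ∀ A : Submodule R N, IsSimpleModule R A → IsDirectSummand R N A) :
    False := by
  haveI hS : IsSimpleModule R (N ⧸ K) := isSimpleModule_iff_isCoatom.mpr hK
  set fst := LinearMap.fst R N (N ⧸ K) with hfst
  set S' : Submodule R (N × (N ⧸ K)) :=
    (⊥ : Submodule R N).prod (⊤ : Submodule R (N ⧸ K)) with hS'def
  -- S' is isomorphic to N ⧸ K
  set gS : (N ⧸ K) →ₗ[R] S' :=
    LinearMap.codRestrict S' (LinearMap.inr R N (N ⧸ K))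
      (fun p => Submodule.mem_prod.mpr ⟨(Submodule.mem_bot R).mpr rfl, Submodule.mem_top⟩) with hgS
  set fS : S' →ₗ[R] (N ⧸ K) := (LinearMap.snd R N (N ⧸ K)).comp S'.subtype with hfS
  have hfg : fS.comp gS = LinearMap.id := by ext p; rfl
  have hgf : gS.comp fS = LinearMap.id := by
    refine LinearMap.ext ?_
    rintro ⟨⟨n, s⟩, hmem⟩
    refine Subtype.ext (Prod.ext ?_ rfl)
    exact ((Submodule.mem_bot R).mp (Submodule.mem_prod.mp hmem).1).symm
  set eS' : S' ≃ₗ[R] (N ⧸ K) := LinearEquiv.ofLinear fS gS hfg hgf with heS'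
  have hS's : IsSimpleModule R S' := IsSimpleModule.congr eS'
  have hcomplS' : IsCompl S' ((⊤ : Submodule R N).prod ⊥) := by
    constructor
    · rw [Submodule.disjoint_def]
      intro x hx hx'
      have h1 : x.1 = 0 := (Submodule.mem_bot R).mp (Submodule.mem_prod.mp hx).1
      have h2 : x.2 = 0 := (Submodule.mem_bot R).mp (Submodule.mem_prod.mp hx').2
      exact Prod.ext h1 h2
    · rw [codisjoint_iff, eq_top_iff]
      intro x _
      refine Submodule.mem_sup.mpr ⟨(0, x.2), ?_, (x.1, 0), ?_, ?_⟩
      · exact Submodule.mem_prod.mpr ⟨(Submodule.mem_bot R).mpr rfl, Submodule.mem_top⟩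
      · exact Submodule.mem_prod.mpr ⟨Submodule.mem_top, (Submodule.mem_bot R).mpr rfl⟩
      · exact Prod.ext (by simp) (by simp)
  -- every simple submodule of N × (N ⧸ K) is a direct summand
  have hsimple_summand : ∀ A : Submodule R (N × (N ⧸ K)), IsSimpleModule R A →
      IsDirectSummand R (N × (N ⧸ K)) A := by
    intro A hA
    by_cases hle : A ≤ S'
    · rw [eq_of_le_simple hS's (simple_ne_bot' hA) hle]
      exact ⟨_, hcomplS'⟩
    · have hAatom : IsAtom A := isSimpleModule_iff_isAtom.mp hA
      have hdisj : A ⊓ S' = ⊥ := by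
        have hlt : A ⊓ S' < A :=
          lt_of_le_of_ne inf_le_left (fun heq => hle (by rw [← heq]; exact inf_le_right))
        exact hAatom.2 _ hlt
      have hA1ne : A.map fst ≠ ⊥ := by
        intro h0
        apply hle
        intro x hx
        have hx1 : x.1 ∈ A.map fst := Submodule.mem_map.mpr ⟨x, hx, rfl⟩
        rw [h0, Submodule.mem_bot] at hx1
        exact Submodule.mem_prod.mpr ⟨(Submodule.mem_bot R).mpr hx1, Submodule.mem_top⟩
      have hA1s : IsSimpleModule R (A.map fst) := map_simple fst hA hA1ne
      obtain ⟨C, hC⟩ := hsum (A.map fst) hA1s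
      refine ⟨C.prod ⊤, ?_, ?_⟩
      · rw [Submodule.disjoint_def]
        intro x hxA hxC
        have hx1A : x.1 ∈ A.map fst := Submodule.mem_map.mpr ⟨x, hxA, rfl⟩
        have hx1C : x.1 ∈ C := (Submodule.mem_prod.mp hxC).1
        have hx10 : x.1 = 0 := by
          have hd := hC.disjoint
          rw [Submodule.disjoint_def] at hd
          exact hd x.1 hx1A hx1C
        have hxS' : x ∈ S' :=
          Submodule.mem_prod.mpr ⟨(Submodule.mem_bot R).mpr hx10, Submodule.mem_top⟩
        have hmem : x ∈ A ⊓ S' := ⟨hxA, hxS'⟩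
        rw [hdisj, Submodule.mem_bot] at hmem
        exact hmem
      · rw [codisjoint_iff, eq_top_iff]
        intro x _
        have hx1 : x.1 ∈ A.map fst ⊔ C := by rw [hC.sup_eq_top]; exact Submodule.mem_top
        obtain ⟨a1, ha1, c, hcC, hsum1⟩ := Submodule.mem_sup.mp hx1
        obtain ⟨y, hyA, hy1⟩ := Submodule.mem_map.mp ha1
        refine Submodule.mem_sup.mpr ⟨y, hyA, x - y, ?_, by abel⟩
        refine Submodule.mem_prod.mpr ⟨?_, Submodule.mem_top⟩
        have hxy1 : (x - y).1 = c := by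
          have hy1' : y.1 = a1 := hy1
          have hsub : (x - y).1 = x.1 - y.1 := rfl
          rw [hsub, hy1', ← hsum1]
          abel
        rw [hxy1]
        exact hcC
  -- the product is simple-direct-injective, hence simple-direct-projective
  have hSDI : SimpleDirectInjective R (N × (N ⧸ K)) := by
    intro A B hAs hBs _ _
    exact hsimple_summand A hAs
  have hSDP := h (N × (N ⧸ K)) hSDI
  set A₀ : Submodule R (N × (N ⧸ K)) := K.prod ⊤ with hA₀def
  set f : (N × (N ⧸ K)) →ₗ[R] (N ⧸ K) := K.mkQ.comp fst with hfdef
  have hfsurj : Function.Surjective f := by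
    intro s
    obtain ⟨n, rfl⟩ := K.mkQ_surjective s
    exact ⟨(n, 0), rfl⟩
  have hker : LinearMap.ker f = A₀ := by
    ext x
    rw [LinearMap.mem_ker, hA₀def, Submodule.mem_prod]
    constructor
    · intro hx
      refine ⟨?_, Submodule.mem_top⟩
      have : K.mkQ x.1 = 0 := hx
      rwa [Submodule.mkQ_apply, Submodule.Quotient.mk_eq_zero] at this
    · intro hx
      show K.mkQ x.1 = 0
      rw [Submodule.mkQ_apply, Submodule.Quotient.mk_eq_zero]
      exact hx.1
  have eQ : ((N × (N ⧸ K)) ⧸ A₀) ≃ₗ[R] (N ⧸ K) :=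
    (Submodule.quotEquivOfEq A₀ _ hker.symm).trans (f.quotKerEquivOfSurjective hfsurj)
  obtain ⟨C, hC⟩ := hSDP A₀ S' hS's ⟨eQ.trans eS'.symm⟩ ⟨_, hcomplS'⟩
  have eC : C ≃ₗ[R] (N ⧸ K) :=
    (Submodule.quotientEquivOfIsCompl A₀ C hC).symm.trans eQ
  have hCs : IsSimpleModule R C := IsSimpleModule.congr eC
  by_cases hC1 : C.map fst = ⊥
  · have hCle : C ≤ A₀ := by
      intro x hx
      have hx1 : x.1 ∈ C.map fst := Submodule.mem_map.mpr ⟨x, hx, rfl⟩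
      rw [hC1, Submodule.mem_bot] at hx1
      refine Submodule.mem_prod.mpr ⟨?_, Submodule.mem_top⟩
      rw [hx1]; exact K.zero_mem
    have hCbot : C = ⊥ := by
      rw [eq_bot_iff]
      intro x hx
      have hd := hC.disjoint
      rw [Submodule.disjoint_def] at hd
      exact (Submodule.mem_bot R).mpr (hd x (hCle hx) hx)
    exact simple_ne_bot' hCs hCbot
  · have hC1s : IsSimpleModule R (C.map fst) := map_simple fst hCs hC1
    have hC1K : C.map fst ≤ K := hsoc _ hC1s
    have hmapA₀ : A₀.map fst = K := by
      apply le_antisymm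
      · rintro _ ⟨x, hx, rfl⟩
        exact (Submodule.mem_prod.mp hx).1
      · intro k hk
        exact Submodule.mem_map.mpr ⟨(k, 0), Submodule.mem_prod.mpr ⟨hk, Submodule.mem_top⟩, rfl⟩
    have hmaptop : (⊤ : Submodule R (N × (N ⧸ K))).map fst = ⊤ := by
      rw [eq_top_iff]
      intro n _
      exact Submodule.mem_map.mpr ⟨(n, 0), Submodule.mem_top, rfl⟩
    have hKtop : (⊤ : Submodule R N) ≤ K := by
      rw [← hmaptop, ← hC.sup_eq_top, Submodule.map_sup, hmapA₀]
      exact sup_le le_rfl hC1K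
    exact hK.1 (top_unique hKtop)

end Aux

/-- If every simple-direct-injective right `R`-module is simple-direct-projective, then
`R` is semilocal (`R/J(R)` semisimple) and right semiartinian (every nonzero module has
nonzero socle), i.e. `R` is left perfect. -/
theorem stmt_18 (R : Type u) [Ring R]
    (h : ∀ (M : Type u) [AddCommGroup M] [Module R M],
      SimpleDirectInjective R M → SimpleDirectProjective R M) :
    IsSemisimpleModule R (R ⧸ (⊥ : Ideal R).jacobson) ∧
      ∀ (M : Type u) [AddCommGroup M] [Module R M],
        Nontrivial M → moduleSocle R M ≠ ⊥ := by
  constructor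
  · -- semilocal: R ⧸ J(R) is semisimple
    by_contra hns
    have hsup : sSup {m : Submodule R (R ⧸ (⊥ : Ideal R).jacobson) | IsSimpleModule R m} ≠ ⊤ :=
      fun htop => hns (IsSemisimpleModule.of_sSup_simples_eq_top htop)
    have hxspan : Submodule.span R {(⊥ : Ideal R).jacobson.mkQ 1} = ⊤ := by
      rw [eq_top_iff]
      intro y _
      obtain ⟨r, rfl⟩ := (⊥ : Ideal R).jacobson.mkQ_surjective y
      refine Submodule.mem_span_singleton.mpr ⟨r, ?_⟩
      rw [← map_smul, smul_eq_mul, mul_one]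
    have hxV : (⊥ : Ideal R).jacobson.mkQ 1 ∉
        sSup {m : Submodule R (R ⧸ (⊥ : Ideal R).jacobson) | IsSimpleModule R m} := by
      intro hmem
      exact hsup (top_unique (hxspan ▸ Submodule.span_le.mpr (Set.singleton_subset_iff.mpr hmem)))
    obtain ⟨K, hK, hVK⟩ := exists_coatom_ge hxspan _ hxV
    exact main_contra h K hK
      (fun C hC => le_trans (le_sSup (show C ∈ {m : Submodule R _ | IsSimpleModule R m} from hC)) hVK)
      (fun A hA => simple_summand_quot_jacobson A hA)
  · -- right semiartinian
    intro M _ _ hnt hbot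
    have hnos : ∀ T : Submodule R M, ¬ IsSimpleModule R T := by
      intro T hT
      apply simple_ne_bot' hT
      have hle : T ≤ moduleSocle R M :=
        le_sSup (show T ∈ {S : Submodule R M | IsSimpleModule R S} from hT)
      rw [hbot] at hle
      exact le_bot_iff.mp hle
    obtain ⟨m, hm⟩ := exists_ne (0 : M)
    have hmem : m ∈ Submodule.span R {m} := Submodule.mem_span_singleton_self m
    have hx0 : (⟨m, hmem⟩ : Submodule.span R {m}) ≠ 0 :=
      fun h0 => hm (congrArg Subtype.val h0)
    have hxspan : Submodule.span R {(⟨m, hmem⟩ : Submodule.span R {m})} = ⊤ := by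
      rw [eq_top_iff]
      intro y _
      obtain ⟨r, hr⟩ := Submodule.mem_span_singleton.mp y.2
      refine Submodule.mem_span_singleton.mpr ⟨r, ?_⟩
      exact Subtype.ext (by simpa using hr)
    have hnosN : ∀ T : Submodule R (Submodule.span R {m}), ¬ IsSimpleModule R T := by
      intro T hT
      by_cases h0 : T.map (Submodule.span R {m}).subtype = ⊥
      · apply simple_ne_bot' hT
        rw [eq_bot_iff]
        intro t ht
        have htm : (t : M) ∈ T.map (Submodule.span R {m}).subtype :=
          Submodule.mem_map.mpr ⟨t, ht, rfl⟩
        rw [h0, Submodule.mem_bot] at htm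
        exact (Submodule.mem_bot _).mpr (Subtype.ext htm)
      · exact hnos _ (map_simple (Submodule.span R {m}).subtype hT h0)
    obtain ⟨K, hK, _⟩ := exists_coatom_ge hxspan ⊥ (by
      rw [Submodule.mem_bot]; exact hx0)
    exact main_contra h K hK (fun C hC => absurd hC (hnosN C))
      (fun A hA => absurd hA (hnosN A))
end

section
/- If R is a ring such that every simple-direct-projective right R-module is simple-direct-injective, then R is a right max-ring, i.e., every nonzero right R-module has a maximal submodule. -/
/-!
Suppose `M ≠ 0` has no maximal submodule. Choosing `C` maximal among the submodules avoiding
some `x ≠ 0`, the quotient `P = M ⧸ C` still has no maximal submodule, and the image of `x`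
spans a simple submodule `A` contained in every nonzero submodule of `P`. Since `P` has no
simple quotient, the only maximal submodule of `P × A` is `P × 0`, which makes `P × A`
simple-direct-projective. It is not simple-direct-injective: `A × 0 ≅ 0 × A` and `0 × A` is a
summand, but a complement of `A × 0` would be maximal, hence equal to `P × 0 ⊇ A × 0`.
-/

variable {R M N : Type*} [Ring R] [AddCommGroup M] [Module R M] [AddCommGroup N] [Module R N]

theorem LinearMap.eq_zero_of_forall_not_isCoatom (hM : ∀ T : Submodule R M, ¬IsCoatom T)
    [IsSimpleModule R N] (f : M →ₗ[R] N) : f = 0 := by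
  by_contra hf
  exact hM _ (isCoatom_ker_of_surjective (surjective_of_ne_zero hf))

theorem forall_not_isCoatom_of_surjective (hM : ∀ T : Submodule R M, ¬IsCoatom T)
    {f : M →ₗ[R] N} (hf : Function.Surjective f) (T : Submodule R N) : ¬IsCoatom T := by
  intro hT
  have : IsSimpleModule R (N ⧸ T) := isSimpleModule_iff_isCoatom.mpr hT
  exact hM _
    (LinearMap.isCoatom_ker_of_surjective (f := T.mkQ ∘ₗ f) (T.mkQ_surjective.comp hf))

theorem Submodule.exists_maximal_notMem {x : M} (hx : x ≠ 0) :
    ∃ C : Submodule R M, Maximal (fun C => x ∉ C) C := by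
  have notMem_sSup (c : Set (Submodule R M)) (hcs : c ⊆ {C | x ∉ C})
      (hc : IsChain (· ≤ ·) c) (y : Submodule R M) (hy : y ∈ c) : x ∉ sSup c := fun hx => by
    obtain ⟨D, hD, hxD⟩ := (Submodule.mem_sSup_of_directed ⟨y, hy⟩ hc.directedOn).1 hx
    exact hcs hD hxD
  obtain ⟨C, -, hC⟩ := zorn_le_nonempty₀ {C : Submodule R M | x ∉ C}
    (fun c hcs hc y hy => ⟨sSup c, notMem_sSup c hcs hc y hy, fun _ => le_sSup⟩) ⊥
    (by simpa using hx)
  exact ⟨C, hC⟩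

theorem Submodule.mkQ_mem_of_maximal_notMem {x : M} {C : Submodule R M}
    (hC : Maximal (fun C => x ∉ C) C) {D : Submodule R (M ⧸ C)} (hD : D ≠ ⊥) :
    C.mkQ x ∈ D := by
  by_contra hxD
  have hCD : C ≤ D.comap C.mkQ := by simpa using LinearMap.ker_le_comap C.mkQ (p := D)
  apply hD
  rw [← D.map_comap_eq_of_surjective C.mkQ_surjective, le_antisymm (hC.2 hxD hCD) hCD,
    Submodule.mkQ_map_self]

theorem Submodule.isSimpleModule_span_mkQ_of_maximal_notMem {x : M} {C : Submodule R M}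
    (hC : Maximal (fun C => x ∉ C) C) : IsSimpleModule R (span R {C.mkQ x}) := by
  rw [isSimpleModule_iff_isAtom]
  refine ⟨fun h => hC.1 ?_, fun D hD => ?_⟩
  · simpa [Submodule.Quotient.mk_eq_zero] using h
  · by_contra hD0
    exact hD.2 (span_le.mpr (by simpa using mkQ_mem_of_maximal_notMem hC hD0))

theorem exists_isSimpleModule_submodule_quotient [Nontrivial M] :
    ∃ (C : Submodule R M) (A : Submodule R (M ⧸ C)), IsSimpleModule R A := by
  obtain ⟨x, hx⟩ := exists_ne (0 : M)
  obtain ⟨C, hC⟩ := Submodule.exists_maximal_notMem (R := R) hx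
  exact ⟨C, _, Submodule.isSimpleModule_span_mkQ_of_maximal_notMem hC⟩

theorem Submodule.isCoatom_fst [IsSimpleModule R N] : IsCoatom (Submodule.fst R M N) :=
  LinearMap.isCoatom_ker_of_surjective LinearMap.snd_surjective

theorem Submodule.isCompl_fst_snd : IsCompl (Submodule.fst R M N) (Submodule.snd R M N) :=
  ⟨disjoint_iff.mpr (fst_inf_snd R M N), codisjoint_iff.mpr (fst_sup_snd R M N)⟩

theorem Submodule.eq_fst_of_isCoatom (hM : ∀ T : Submodule R M, ¬IsCoatom T)
    [IsSimpleModule R N] {T : Submodule R (M × N)} (hT : IsCoatom T) :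
    T = Submodule.fst R M N := by
  have : IsSimpleModule R ((M × N) ⧸ T) := isSimpleModule_iff_isCoatom.mpr hT
  have hfst : Submodule.fst R M N ≤ T := by
    have := LinearMap.range_le_ker_iff.mpr
      (LinearMap.eq_zero_of_forall_not_isCoatom hM (T.mkQ ∘ₗ LinearMap.inl R M N))
    rwa [LinearMap.range_inl, ker_mkQ] at this
  exact (isCoatom_fst.le_iff.mp hfst).resolve_left hT.1

theorem simpleDirectProjective_prod (hM : ∀ T : Submodule R M, ¬IsCoatom T)
    [IsSimpleModule R N] : SimpleDirectProjective R (M × N) := by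
  rintro A B _ ⟨e⟩ -
  have hA : IsCoatom A := isSimpleModule_iff_isCoatom.mp (IsSimpleModule.congr e)
  rw [Submodule.eq_fst_of_isCoatom hM hA]
  exact ⟨_, Submodule.isCompl_fst_snd⟩

theorem not_simpleDirectInjective_prod (hM : ∀ T : Submodule R M, ¬IsCoatom T)
    (A : Submodule R M) [IsSimpleModule R A] : ¬SimpleDirectInjective R (M × A) := by
  intro hSDI
  set A₁ := A.map (LinearMap.inl R M A)
  have e : A₁ ≃ₗ[R] A := (Submodule.equivMapOfInjective _ LinearMap.inl_injective A).symm
  have : IsSimpleModule R A₁ := IsSimpleModule.congr e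
  obtain ⟨B, hB⟩ := hSDI A₁ (Submodule.snd R M A) this
    (IsSimpleModule.congr (Submodule.sndEquiv R M A)) ⟨e.trans (Submodule.sndEquiv R M A).symm⟩
    ⟨_, Submodule.isCompl_fst_snd.symm⟩
  have hB_fst : B = Submodule.fst R M A :=
    Submodule.eq_fst_of_isCoatom hM (hB.isAtom_iff_isCoatom.mp (isSimpleModule_iff_isAtom.mp this))
  have hA₁_le : A₁ ≤ B :=
    hB_fst ▸ (LinearMap.map_le_range (f := LinearMap.inl R M A)).trans
      (LinearMap.range_inl R M A).le
  exact (isSimpleModule_iff_isAtom.mp this).1 (hB.disjoint.eq_bot_of_le hA₁_le)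

/-- If every simple-direct-projective right `R`-module is simple-direct-injective, then
`R` is a right max-ring: every nonzero module has a maximal submodule. -/
theorem stmt_19 (R : Type u) [Ring R]
    (h : ∀ (M : Type u) [AddCommGroup M] [Module R M],
      SimpleDirectProjective R M → SimpleDirectInjective R M) :
    ∀ (M : Type u) [AddCommGroup M] [Module R M],
      Nontrivial M → ∃ P : Submodule R M, IsCoatom P := by
  intro M _ _ _
  by_contra! hM
  obtain ⟨C, A, hA⟩ := exists_isSimpleModule_submodule_quotient (R := R) (M := M)
  have hP := forall_not_isCoatom_of_surjective hM C.mkQ_surjective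
  exact not_simpleDirectInjective_prod hP A (h _ (simpleDirectProjective_prod hP))
end
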